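/- arXiv:2601.03145 — 3 statements merged into one kernel-verified Lean document; each statement's English description precedes it below -/
import Mathlib

section
/- For every integer d ≥ 2, the Fine spectrum satisfies S^F(d-1) ⊆ S^F(d); that is, every value of the Fine ℚ-codegree attained by a (d-1)-dimensional lattice polytope is also attained by a d-dimensional lattice polytope. -/
open Set

noncomputable section

/-- The pairing `⟨a, x⟩ = ∑ i, a i * x i` of an integer linear functional with a point. -/
def pair {d : ℕ} (a : Fin d → ℤ) (x : Fin d → ℝ) : ℝ := ∑ i, (a i : ℝ) * x i

/-- The support function `h_P(a) = min_{x ∈ P} ⟨a, x⟩`. -/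
def suppFn {d : ℕ} (P : Set (Fin d → ℝ)) (a : Fin d → ℤ) : ℝ := sInf (pair a '' P)

/-- The Fine adjoint polytope `P^{F(s)}`. -/
def fineAdjoint {d : ℕ} (P : Set (Fin d → ℝ)) (s : ℝ) : Set (Fin d → ℝ) :=
  {x | ∀ a : Fin d → ℤ, a ≠ 0 → suppFn P a + s ≤ pair a x}

/-- The Fine number `n^F(P) = sup {s > 0 : P^{F(s)} ≠ ∅}`. -/
def fineNumber {d : ℕ} (P : Set (Fin d → ℝ)) : ℝ :=
  sSup {s : ℝ | 0 < s ∧ (fineAdjoint P s).Nonempty}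

/-- The Fine ℚ-codegree `μ^F(P) = (n^F(P))⁻¹`. -/
def fineCodeg {d : ℕ} (P : Set (Fin d → ℝ)) : ℝ := (fineNumber P)⁻¹

/-- The Fine core `core^F(P) = P^{F(n^F(P))}`. -/
def fineCore {d : ℕ} (P : Set (Fin d → ℝ)) : Set (Fin d → ℝ) := fineAdjoint P (fineNumber P)

/-- A rational polytope: the convex hull of finitely many rational points. -/
def IsRationalPolytope {d : ℕ} (P : Set (Fin d → ℝ)) : Prop :=
  ∃ V : Finset (Fin d → ℝ), V.Nonempty ∧ (∀ v ∈ V, ∀ i, ∃ q : ℚ, v i = (q : ℝ)) ∧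
    P = convexHull ℝ (V : Set (Fin d → ℝ))

/-- A lattice polytope: the convex hull of finitely many integer points. -/
def IsLatticePolytope {d : ℕ} (P : Set (Fin d → ℝ)) : Prop :=
  ∃ V : Finset (Fin d → ℝ), V.Nonempty ∧ (∀ v ∈ V, ∀ i, ∃ n : ℤ, v i = (n : ℝ)) ∧
    P = convexHull ℝ (V : Set (Fin d → ℝ))

/-- Full-dimensional: the affine hull is all of `ℝ^d`. -/
def IsFullDim {d : ℕ} (P : Set (Fin d → ℝ)) : Prop := affineSpan ℝ P = ⊤

/-- A nonzero integer functional `a` is a Fine core normal of `P` if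
`⟨a, y⟩ = h_P(a) + n^F(P)` for every `y` in the Fine core of `P`. -/
def IsFineCoreNormal {d : ℕ} (P : Set (Fin d → ℝ)) (a : Fin d → ℤ) : Prop :=
  a ≠ 0 ∧ ∀ y ∈ fineCore P, pair a y = suppFn P a + fineNumber P

/-- The set of integer points of `ℝ^k`. -/
def intPts (k : ℕ) : Set (Fin k → ℝ) := {x | ∀ i, ∃ n : ℤ, x i = (n : ℝ)}

/-- The Fine spectrum in dimension `k`. -/
def fineSpec (k : ℕ) : Set ℝ :=
  {r | ∃ P : Set (Fin k → ℝ), IsLatticePolytope P ∧ IsFullDim P ∧ r = fineCodeg P}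

/-- Unimodular equivalence of subsets of `ℝ^k`. -/
def UnimodEquiv {k : ℕ} (P Q : Set (Fin k → ℝ)) : Prop :=
  ∃ U : Matrix (Fin k) (Fin k) ℤ, IsUnit U.det ∧ ∃ v : Fin k → ℤ,
    P = (fun x => fun i => (∑ j, (U i j : ℝ) * x j) + (v i : ℝ)) '' Q

/-- The standard simplex `Δ_k = conv{0, e_1, ..., e_k}`. -/
def stdSimp (k : ℕ) : Set (Fin k → ℝ) :=
  convexHull ℝ (insert (0 : Fin k → ℝ) (Set.range fun i => Pi.single i (1 : ℝ)))

/-- The lattice pyramid `Pyr(Q) = conv((Q × {1}) ∪ {0})`. -/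
def pyrSet {k : ℕ} (Q : Set (Fin k → ℝ)) : Set (Fin (k + 1) → ℝ) :=
  convexHull ℝ (((fun x => Fin.snoc x (1 : ℝ)) '' Q) ∪ {0})

/-- Twice the standard triangle, `2Δ₂ = conv{(0,0),(2,0),(0,2)}`. -/
def twoDelta2 : Set (Fin 2 → ℝ) :=
  convexHull ℝ ({![0, 0], ![2, 0], ![0, 2]} : Set (Fin 2 → ℝ))

/-- The `m`-fold iterated lattice pyramid over `2Δ₂`. -/
def iterPyr : (m : ℕ) → Set (Fin (2 + m) → ℝ)
  | 0 => twoDelta2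
  | m + 1 => pyrSet (iterPyr m)

end
section Stmt4Aux

open Finset in
lemma pair_isLinearMap {n : ℕ} (a : Fin n → ℤ) : IsLinearMap ℝ (pair a) := by
  constructor
  · intro x y; simp [pair, mul_add, Finset.sum_add_distrib]
  · intro c x; simp [pair, Finset.mul_sum, mul_left_comm]

lemma pair_neg {n : ℕ} (a : Fin n → ℤ) (x : Fin n → ℝ) : pair (-a) x = -pair a x := by
  simp [pair]

lemma pair_lb {n : ℕ} (a : Fin n → ℤ) (W : Finset (Fin n → ℝ)) (hW : W.Nonempty) :
    ∀ z ∈ convexHull ℝ (W : Set (Fin n → ℝ)),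
      W.inf' hW (pair a) ≤ pair a z := by
  intro z hz
  have h : convexHull ℝ (W : Set (Fin n → ℝ)) ⊆
      {w | W.inf' hW (pair a) ≤ pair a w} := by
    apply convexHull_min
    · intro w hw
      exact Finset.inf'_le (pair a) (by simpa using hw)
    · exact convex_halfSpace_ge (𝕜 := ℝ) (β := ℝ) (pair_isLinearMap a) _
  exact h hz

lemma bddBelow_pair_hull {n : ℕ} (a : Fin n → ℤ) (W : Finset (Fin n → ℝ)) (hW : W.Nonempty) :
    BddBelow (pair a '' convexHull ℝ (W : Set (Fin n → ℝ))) := by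
  refine ⟨W.inf' hW (pair a), ?_⟩
  rintro _ ⟨z, hz, rfl⟩
  exact pair_lb a W hW z hz

lemma suppFn_le_hull {n : ℕ} {W : Finset (Fin n → ℝ)} (hW : W.Nonempty) {z : Fin n → ℝ}
    (hz : z ∈ convexHull ℝ (W : Set (Fin n → ℝ))) (a : Fin n → ℤ) :
    suppFn (convexHull ℝ (W : Set (Fin n → ℝ))) a ≤ pair a z :=
  csInf_le (bddBelow_pair_hull a W hW) ⟨z, hz, rfl⟩

lemma pair_snoc {k : ℕ} (a : Fin (k + 1) → ℤ) (y : Fin k → ℝ) (t : ℝ) :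
    pair a (Fin.snoc y t) = pair (a ∘ Fin.castSucc) y + (a (Fin.last k) : ℝ) * t := by
  simp [pair, Fin.sum_univ_castSucc]

lemma pair_split {k : ℕ} (a : Fin (k + 1) → ℤ) (x : Fin (k + 1) → ℝ) :
    pair a x = pair (a ∘ Fin.castSucc) (x ∘ Fin.castSucc) + (a (Fin.last k) : ℝ) * x (Fin.last k) := by
  simp [pair, Fin.sum_univ_castSucc]

/-- The linear embedding `x ↦ snoc x 0`. -/
noncomputable def snocL (k : ℕ) : (Fin k → ℝ) →ₗ[ℝ] (Fin (k + 1) → ℝ) where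
  toFun x := Fin.snoc x 0
  map_add' x y := by
    funext i
    refine Fin.lastCases ?_ (fun j => ?_) i <;> simp
  map_smul' c x := by
    funext i
    refine Fin.lastCases ?_ (fun j => ?_) i <;> simp

lemma snoc_eq_add {k : ℕ} (y : Fin k → ℝ) (t : ℝ) :
    (Fin.snoc y t : Fin (k + 1) → ℝ) = Fin.snoc (0 : Fin k → ℝ) t + snocL k y := by
  funext i
  refine Fin.lastCases ?_ (fun j => ?_) i <;> simp [snocL]

end Stmt4Aux
section Prism

variable {k : ℕ}

/-- Affine map `y ↦ snoc y t`. -/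
noncomputable def snocA (k : ℕ) (t : ℝ) : (Fin k → ℝ) →ᵃ[ℝ] (Fin (k + 1) → ℝ) where
  toFun y := Fin.snoc y t
  linear := snocL k
  map_vadd' p v := by
    funext i
    refine Fin.lastCases ?_ (fun j => ?_) i <;> simp [snocL]

/-- Vertex set of the prism `Q × [0, M]`. -/
noncomputable def prismW (V : Finset (Fin k → ℝ)) (M : ℤ) : Finset (Fin (k + 1) → ℝ) :=
  V.image (fun v => Fin.snoc v (0 : ℝ)) ∪ V.image (fun v => Fin.snoc v ((M : ℝ)))

lemma prismW_nonempty {V : Finset (Fin k → ℝ)} (hV : V.Nonempty) (M : ℤ) :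
    (prismW V M).Nonempty := by
  obtain ⟨v, hv⟩ := hV
  exact ⟨Fin.snoc v 0, Finset.mem_union_left _ (Finset.mem_image_of_mem _ hv)⟩

lemma snoc_mem_prism {V : Finset (Fin k → ℝ)} {M : ℤ} {t : ℝ}
    (ht : t = 0 ∨ t = (M : ℝ)) {y : Fin k → ℝ} (hy : y ∈ convexHull ℝ (V : Set (Fin k → ℝ))) :
    Fin.snoc y t ∈ convexHull ℝ (prismW V M : Set (Fin (k + 1) → ℝ)) := by
  have h1 : Fin.snoc y t ∈ convexHull ℝ ((fun v => (Fin.snoc v t : Fin (k + 1) → ℝ)) '' V) := by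
    have := (snocA k t).image_convexHull (V : Set (Fin k → ℝ))
    have hmem : Fin.snoc y t ∈ (snocA k t) '' (convexHull ℝ (V : Set (Fin k → ℝ))) :=
      ⟨y, hy, rfl⟩
    rw [this] at hmem
    exact hmem
  refine convexHull_mono ?_ h1
  rcases ht with rfl | rfl
  · intro z hz
    simp only [prismW, Finset.coe_union, Finset.coe_image]
    exact Set.mem_union_left _ hz
  · intro z hz
    simp only [prismW, Finset.coe_union, Finset.coe_image]
    exact Set.mem_union_right _ hz

/-- Projection forgetting the last coordinate. -/
noncomputable def projL (k : ℕ) : (Fin (k + 1) → ℝ) →ₗ[ℝ] (Fin k → ℝ) :=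
  LinearMap.funLeft ℝ ℝ Fin.castSucc

lemma projL_apply (x : Fin (k + 1) → ℝ) : projL k x = x ∘ Fin.castSucc := rfl

lemma projL_snoc (y : Fin k → ℝ) (t : ℝ) : projL k (Fin.snoc y t) = y := by
  funext j
  simp [projL_apply]

lemma proj_prism {V : Finset (Fin k → ℝ)} (M : ℤ) :
    projL k '' convexHull ℝ (prismW V M : Set (Fin (k + 1) → ℝ))
      = convexHull ℝ (V : Set (Fin k → ℝ)) := by
  rw [(projL k).image_convexHull]
  congr 1
  simp only [prismW, Finset.coe_union, Finset.coe_image, Set.image_union, Set.image_image]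
  have h0 : ∀ t : ℝ, (fun v : Fin k → ℝ => projL k (Fin.snoc v t)) = fun v => v := by
    intro t; funext v; exact projL_snoc v t
  rw [h0 0, h0 (M : ℝ)]
  simp [Set.image_id']

lemma suppFn_snoc_zero {V : Finset (Fin k → ℝ)} (hV : V.Nonempty) (M : ℤ) (a' : Fin k → ℤ) :
    suppFn (convexHull ℝ (prismW V M : Set (Fin (k + 1) → ℝ))) ((Fin.snoc a' (0 : ℤ) : Fin (k + 1) → ℤ))
      = suppFn (convexHull ℝ (V : Set (Fin k → ℝ))) a' := by
  unfold suppFn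
  congr 1
  have hfun : pair ((Fin.snoc a' (0 : ℤ) : Fin (k + 1) → ℤ)) = fun z : Fin (k + 1) → ℝ => pair a' (projL k z) := by
    funext z
    rw [pair_split]
    have h1 : ((Fin.snoc a' (0 : ℤ) : Fin (k + 1) → ℤ)) ∘ Fin.castSucc = a' := by funext j; simp
    have h2 : ((Fin.snoc a' (0 : ℤ) : Fin (k + 1) → ℤ)) (Fin.last k) = 0 := by simp
    rw [h1, h2, projL_apply]
    simp
  rw [hfun, show (fun z : Fin (k + 1) → ℝ => pair a' (projL k z)) = pair a' ∘ (projL k) from rfl,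
    Set.image_comp, proj_prism]

lemma suppFn_prism_le {V : Finset (Fin k → ℝ)} (hV : V.Nonempty) (M : ℤ)
    (a : Fin (k + 1) → ℤ) :
    suppFn (convexHull ℝ (prismW V M : Set (Fin (k + 1) → ℝ))) a
      ≤ suppFn (convexHull ℝ (V : Set (Fin k → ℝ))) (a ∘ Fin.castSucc)
        + min 0 ((a (Fin.last k) : ℝ) * M) := by
  set Q : Set (Fin k → ℝ) := convexHull ℝ (V : Set (Fin k → ℝ)) with hQ
  set P : Set (Fin (k + 1) → ℝ) := convexHull ℝ (prismW V M : Set (Fin (k + 1) → ℝ)) with hP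
  set c : ℝ := ((a (Fin.last k) : ℤ) : ℝ) with hc
  have hQne : (pair (a ∘ Fin.castSucc) '' Q).Nonempty := by
    obtain ⟨v, hv⟩ := hV
    exact ⟨_, ⟨v, subset_convexHull ℝ _ (Finset.mem_coe.mpr hv), rfl⟩⟩
  have key : suppFn P a - min 0 (c * M) ≤ sInf (pair (a ∘ Fin.castSucc) '' Q) := by
    refine le_csInf hQne ?_
    rintro b ⟨y, hy, rfl⟩
    rcases le_total (c * M) 0 with h | h
    · rw [min_eq_right h]
      have hm : Fin.snoc y ((M : ℝ)) ∈ P := snoc_mem_prism (Or.inr rfl) hy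
      have := suppFn_le_hull (prismW_nonempty hV M) hm a
      rw [pair_snoc] at this
      linarith
    · rw [min_eq_left h]
      have hm : Fin.snoc y (0 : ℝ) ∈ P := snoc_mem_prism (Or.inl rfl) hy
      have := suppFn_le_hull (prismW_nonempty hV M) hm a
      rw [pair_snoc] at this
      simp only [mul_zero, add_zero] at this
      linarith
  have : suppFn Q (a ∘ Fin.castSucc) = sInf (pair (a ∘ Fin.castSucc) '' Q) := rfl
  linarith [key]

lemma prism_fulldim {V : Finset (Fin k → ℝ)} (hV : V.Nonempty) (M : ℤ) (hM : (M : ℝ) ≠ 0)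
    (hfull : affineSpan ℝ (convexHull ℝ (V : Set (Fin k → ℝ))) = ⊤) :
    affineSpan ℝ (convexHull ℝ (prismW V M : Set (Fin (k + 1) → ℝ))) = ⊤ := by
  rw [affineSpan_convexHull] at hfull ⊢
  obtain ⟨v0, hv0⟩ := hV
  have hWne : ((prismW V M : Set (Fin (k + 1) → ℝ))).Nonempty := by
    obtain ⟨w, hw⟩ := prismW_nonempty ⟨v0, hv0⟩ M
    exact ⟨w, Finset.mem_coe.mpr hw⟩
  rw [AffineSubspace.affineSpan_eq_top_iff_vectorSpan_eq_top_of_nonempty ℝ (Fin (k+1) → ℝ) (Fin (k+1) → ℝ) hWne]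
  have hVspan : vectorSpan ℝ (V : Set (Fin k → ℝ)) = ⊤ := by
    rw [← direction_affineSpan, hfull]
    exact AffineSubspace.direction_top ℝ _ _
  -- the embedded differences
  have hmap : (vectorSpan ℝ (V : Set (Fin k → ℝ))).map (snocL k)
      ≤ vectorSpan ℝ (prismW V M : Set (Fin (k + 1) → ℝ)) := by
    rw [vectorSpan_def, Submodule.map_span]
    refine Submodule.span_le.mpr ?_
    rintro _ ⟨u, hu, rfl⟩
    rw [Set.mem_vsub] at hu
    obtain ⟨p, hp, q, hq, rfl⟩ := hu
    have h1 : (Fin.snoc p 0 : Fin (k+1) → ℝ) ∈ (prismW V M : Set (Fin (k + 1) → ℝ)) := by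
      simp only [prismW, Finset.coe_union, Finset.coe_image]
      exact Set.mem_union_left _ ⟨p, hp, rfl⟩
    have h2 : (Fin.snoc q 0 : Fin (k+1) → ℝ) ∈ (prismW V M : Set (Fin (k + 1) → ℝ)) := by
      simp only [prismW, Finset.coe_union, Finset.coe_image]
      exact Set.mem_union_left _ ⟨q, hq, rfl⟩
    have h3 := vsub_mem_vectorSpan ℝ h1 h2
    have h4 : (Fin.snoc p 0 : Fin (k+1) → ℝ) -ᵥ Fin.snoc q 0 = snocL k (p -ᵥ q) := by
      funext i
      refine Fin.lastCases ?_ (fun j => ?_) i <;> simp [snocL]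
    rwa [h4] at h3
  have hlast : (Fin.snoc v0 ((M:ℝ)) : Fin (k+1) → ℝ) -ᵥ Fin.snoc v0 0
      ∈ vectorSpan ℝ (prismW V M : Set (Fin (k + 1) → ℝ)) := by
    refine vsub_mem_vectorSpan ℝ ?_ ?_
    · simp only [prismW, Finset.coe_union, Finset.coe_image]
      exact Set.mem_union_right _ ⟨v0, hv0, rfl⟩
    · simp only [prismW, Finset.coe_union, Finset.coe_image]
      exact Set.mem_union_left _ ⟨v0, hv0, rfl⟩
  rw [eq_top_iff]
  rintro u -
  have hu1 : snocL k (u ∘ Fin.castSucc) ∈ vectorSpan ℝ (prismW V M : Set (Fin (k + 1) → ℝ)) :=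
    hmap ⟨u ∘ Fin.castSucc, by rw [hVspan]; trivial, rfl⟩
  have hu2 := Submodule.smul_mem _ (u (Fin.last k) / (M : ℝ)) hlast
  have hdecomp : u = snocL k (u ∘ Fin.castSucc)
      + (u (Fin.last k) / (M : ℝ)) • ((Fin.snoc v0 ((M:ℝ)) : Fin (k+1) → ℝ) -ᵥ Fin.snoc v0 0) := by
    funext i
    refine Fin.lastCases ?_ (fun j => ?_) i
    · simp [snocL, div_mul_cancel₀, hM]
    · simp [snocL]
  rw [hdecomp]
  exact Submodule.add_mem _ hu1 hu2

end Prism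
/-- the Fine spectrum in dimension `d - 1` is contained in that of dimension `d`. -/
theorem stmt_4 (d : ℕ) (hd : 2 ≤ d) : fineSpec (d - 1) ⊆ fineSpec d := by
  obtain ⟨k, rfl⟩ : ∃ k, d = k + 1 := ⟨d - 1, by omega⟩
  have hk : 0 < k := by omega
  simp only [Nat.add_sub_cancel]
  rintro r ⟨Q, ⟨V, hVne, hVint, rfl⟩, hfull, rfl⟩
  set Q : Set (Fin k → ℝ) := convexHull ℝ (V : Set (Fin k → ℝ)) with hQdef
  -- the bound on admissible s for Q
  set i0 : Fin k := ⟨0, hk⟩ with hi0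
  set a0 : Fin k → ℤ := Pi.single i0 1 with ha0
  set C : ℝ := -(suppFn Q a0 + suppFn Q (-a0)) with hC
  have hB : ∀ s : ℝ, 0 < s → (fineAdjoint Q s).Nonempty → 2 * s ≤ C := by
    rintro s hs ⟨x, hx⟩
    have ha0ne : a0 ≠ 0 := by
      intro h
      have := congrFun h i0
      simp [ha0, Pi.single_eq_same] at this
    have hna0ne : -a0 ≠ 0 := by
      intro h
      have := congrFun h i0
      simp [ha0, Pi.single_eq_same] at this
    have h1 := hx a0 ha0ne
    have h2 := hx (-a0) hna0ne
    rw [pair_neg] at h2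
    simp only [hC]
    linarith
  set M : ℤ := max 1 ⌈C⌉ with hM
  have hM1 : (1 : ℝ) ≤ (M : ℝ) := by
    have : (1 : ℤ) ≤ M := le_max_left _ _
    exact_mod_cast this
  have hMC : C ≤ (M : ℝ) := by
    refine le_trans (Int.le_ceil C) ?_
    have : (⌈C⌉ : ℤ) ≤ M := le_max_right _ _
    exact_mod_cast this
  set P : Set (Fin (k + 1) → ℝ) := convexHull ℝ (prismW V M : Set (Fin (k + 1) → ℝ)) with hPdef
  have hWne : (prismW V M).Nonempty := prismW_nonempty hVne M
  -- the two fine-adjoint sets coincide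
  have hPQ : ∀ s : ℝ, 0 < s → (fineAdjoint P s).Nonempty → (fineAdjoint Q s).Nonempty := by
    rintro s hs ⟨x, hx⟩
    refine ⟨projL k x, fun a' ha' => ?_⟩
    have hane : (Fin.snoc a' (0 : ℤ) : Fin (k + 1) → ℤ) ≠ 0 := by
      intro h
      apply ha'
      funext j
      have := congrFun h (Fin.castSucc j)
      simpa using this
    have h1 := hx _ hane
    rw [suppFn_snoc_zero hVne M a'] at h1
    rw [pair_split] at h1
    have h2 : (Fin.snoc a' (0 : ℤ) : Fin (k + 1) → ℤ) ∘ Fin.castSucc = a' := by funext j; simp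
    have h3 : ((Fin.snoc a' (0 : ℤ) : Fin (k + 1) → ℤ) (Fin.last k) : ℝ) = 0 := by simp
    rw [h2, h3, zero_mul, add_zero] at h1
    exact h1
  have hQP : ∀ s : ℝ, 0 < s → (fineAdjoint Q s).Nonempty → (fineAdjoint P s).Nonempty := by
    rintro s hs ⟨x', hx'⟩
    have hsM : 2 * s ≤ (M : ℝ) := le_trans (hB s hs ⟨x', hx'⟩) hMC
    refine ⟨Fin.snoc x' ((M : ℝ) / 2), fun a ha => ?_⟩
    have hub := suppFn_prism_le hVne M a
    rw [pair_snoc]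
    set a' : Fin k → ℤ := a ∘ Fin.castSucc with ha'
    set c : ℝ := ((a (Fin.last k) : ℤ) : ℝ) with hc
    by_cases h0 : a' = 0
    · have hcne : a (Fin.last k) ≠ 0 := by
        intro hcz
        apply ha
        funext i
        refine Fin.lastCases ?_ (fun j => ?_) i
        · exact hcz
        · exact congrFun h0 j
      have hq0 : suppFn Q a' = 0 := by
        rw [h0]
        unfold suppFn
        have himg : pair (0 : Fin k → ℤ) '' Q = {0} := by
          have hfn : pair (0 : Fin k → ℤ) = fun _ : Fin k → ℝ => (0 : ℝ) := by
            funext z; simp [pair]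
          rw [hfn]
          obtain ⟨v, hv⟩ := hVne
          exact Set.Nonempty.image_const ⟨v, subset_convexHull ℝ _ (Finset.mem_coe.mpr hv)⟩ 0
        rw [himg, csInf_singleton]
      have hpx : pair a' x' = 0 := by rw [h0]; simp [pair]
      rw [hq0, zero_add] at hub
      rw [hpx]
      -- goal : suppFn P a + s ≤ 0 + c * (M / 2)
      rcases lt_or_gt_of_ne hcne with hneg | hpos
      · have hc1 : c ≤ -1 := by
          have : a (Fin.last k) ≤ -1 := by omega
          rw [hc]; exact_mod_cast this
        have hminle : min 0 (c * (M : ℝ)) ≤ c * (M : ℝ) := min_le_right _ _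
        nlinarith [hub, hsM, hM1]
      · have hc1 : (1 : ℝ) ≤ c := by
          have : (1 : ℤ) ≤ a (Fin.last k) := by omega
          rw [hc]; exact_mod_cast this
        have hminle : min 0 (c * (M : ℝ)) ≤ 0 := min_le_left _ _
        nlinarith [hub, hsM, hM1]
    · have hqx := hx' a' h0
      have hmin : min 0 (c * (M : ℝ)) ≤ c * ((M : ℝ) / 2) := by
        rcases le_total (c * (M : ℝ)) 0 with h | h
        · rw [min_eq_right h]; linarith
        · rw [min_eq_left h]; linarith
      linarith [hub]
  -- assemble the lattice polytope P
  refine ⟨P, ⟨prismW V M, hWne, ?_, hPdef⟩, ?_, ?_⟩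
  · -- integrality of vertices
    intro w hw i
    simp only [prismW, Finset.mem_union, Finset.mem_image] at hw
    rcases hw with ⟨v, hv, rfl⟩ | ⟨v, hv, rfl⟩
    · refine Fin.lastCases ?_ (fun j => ?_) i
      · exact ⟨0, by simp⟩
      · obtain ⟨n, hn⟩ := hVint v hv j
        exact ⟨n, by simpa using hn⟩
    · refine Fin.lastCases ?_ (fun j => ?_) i
      · exact ⟨M, by simp⟩
      · obtain ⟨n, hn⟩ := hVint v hv j
        exact ⟨n, by simpa using hn⟩
  · -- full-dimensionality
    exact prism_fulldim hVne M (by positivity) hfull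
  · -- equality of Fine codegrees
    unfold fineCodeg fineNumber
    congr 2
    ext s
    exact ⟨fun ⟨hs, h⟩ => ⟨hs, hQP s hs h⟩, fun ⟨hs, h⟩ => ⟨hs, hPQ s hs h⟩⟩
end

section
/- Let d ≥ 2. Every element of S^F(d) \ S^F(d-1) is equal to μ^F(P) for some d-dimensional lattice polytope P ⊆ ℝ^d whose Fine core core^F(P) consists of a single point. -/
open Set

/-!
If the Fine core of `P` contains two points `x ≠ y`, project `P` to `ℝ^{d-1}` by an integer
matrix `M` whose rows are part of a basis of `ℤ^d` and whose integer row span contains every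
integer functional vanishing on `y - x`. The image `Q` is a full-dimensional lattice polytope
with `n^F(Q) = n^F(P)`: adjoint points of `P` project to adjoint points of `Q`; conversely a
point of `Q^{F(s)}` with `s > n^F(P)` would lift to some `p ∈ P` with `⟨a, p⟩ ≥ h_P(a) + s`
for every integer `a` vanishing on `y - x`, and mixing `p` with the midpoint of `[x, y]` and an
interior point of `P` would give a point of `P^{F(t)}` with `t > n^F(P)`. So `μ^F(P) ∈ S^F(d-1)`
unless the Fine core is a point.
-/

open Matrix

variable {d k : ℕ}

section Pairing

lemma pair_eq_dotProduct (a : Fin d → ℤ) (x : Fin d → ℝ) : pair a x = (Int.cast ∘ a) ⬝ᵥ x := rfl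

lemma pair_add_right (a : Fin d → ℤ) (x y : Fin d → ℝ) : pair a (x + y) = pair a x + pair a y := by
  simp only [pair_eq_dotProduct, dotProduct_add]

lemma pair_sub_right (a : Fin d → ℤ) (x y : Fin d → ℝ) : pair a (x - y) = pair a x - pair a y := by
  simp only [pair_eq_dotProduct, dotProduct_sub]

lemma pair_smul_right (a : Fin d → ℤ) (c : ℝ) (x : Fin d → ℝ) : pair a (c • x) = c * pair a x := by
  simp only [pair_eq_dotProduct, dotProduct_smul, smul_eq_mul]

lemma pair_zero_left (x : Fin d → ℝ) : pair 0 x = 0 := by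
  simp [pair]

lemma pair_neg_left (a : Fin d → ℤ) (x : Fin d → ℝ) : pair (-a) x = -pair a x := by
  simp [pair, Finset.sum_neg_distrib]

lemma pair_single_left (i : Fin d) (x : Fin d → ℝ) : pair (Pi.single i 1) x = x i := by
  rw [pair, Finset.sum_eq_single i] <;> simp +contextual

lemma pair_single_right (a : Fin d → ℤ) (i : Fin d) (t : ℝ) :
    pair a (Pi.single i t) = a i * t := by
  rw [pair_eq_dotProduct, dotProduct_single, Function.comp_apply]

lemma continuous_pair (a : Fin d → ℤ) : Continuous (pair a) := by
  unfold pair; fun_prop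

def pairLinear (x : Fin d → ℝ) : (Fin d → ℤ) →ₗ[ℤ] ℝ where
  toFun a := pair a x
  map_add' a b := by simp [pair, add_mul, Finset.sum_add_distrib]
  map_smul' c a := by simp [pair, Finset.mul_sum, mul_assoc]

lemma pairLinear_apply (x : Fin d → ℝ) (a : Fin d → ℤ) : pairLinear x a = pair a x := rfl

lemma eq_zero_of_pairLinear_eq_zero {x : Fin d → ℝ} (hx : pairLinear x = 0) : x = 0 := by
  ext i
  simpa [pairLinear_apply, pair_single_left] using LinearMap.congr_fun hx (Pi.single i 1)

end Pairing

section SupportFunction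

variable {T : Set (Fin d → ℝ)}

lemma suppFn_le_pair (hT : IsCompact T) {x : Fin d → ℝ} (hx : x ∈ T) (a : Fin d → ℤ) :
    suppFn T a ≤ pair a x :=
  csInf_le (hT.image (continuous_pair a)).bddBelow (Set.mem_image_of_mem _ hx)

lemma le_suppFn (hT : T.Nonempty) {a : Fin d → ℤ} {c : ℝ} (h : ∀ x ∈ T, c ≤ pair a x) :
    c ≤ suppFn T a :=
  le_csInf (hT.image _) (Set.forall_mem_image.2 h)

lemma exists_closedBall_subset (hconv : Convex ℝ T) (hfd : affineSpan ℝ T = ⊤) :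
    ∃ z ρ, 0 < ρ ∧ Metric.closedBall z ρ ⊆ T := by
  obtain ⟨z, hz⟩ := (hconv.interior_nonempty_iff_affineSpan_eq_top).2 hfd
  obtain ⟨ρ, hρ, hball⟩ := Metric.nhds_basis_closedBall.mem_iff.1 (mem_interior_iff_mem_nhds.1 hz)
  exact ⟨z, ρ, hρ, hball⟩

lemma suppFn_add_mul_abs_le (hT : IsCompact T) {z : Fin d → ℝ} {ρ : ℝ}
    (hz : Metric.closedBall z ρ ⊆ T) (hρ : 0 ≤ ρ) (a : Fin d → ℤ) (i : Fin d) :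
    suppFn T a + ρ * |(a i : ℝ)| ≤ pair a z := by
  set t : ℝ := if 0 ≤ a i then -ρ else ρ
  have hmem : z + Pi.single i t ∈ T := by
    refine hz (mem_closedBall_iff_norm.2 ?_)
    rw [add_sub_cancel_left, Pi.norm_single, Real.norm_eq_abs]
    simp only [t]; split_ifs <;> simp [abs_of_nonneg hρ]
  have hval : (a i : ℝ) * t = -(ρ * |(a i : ℝ)|) := by
    by_cases h : 0 ≤ a i
    · simp only [t, if_pos h, abs_of_nonneg (Int.cast_nonneg h)]; ring
    · simp only [t, if_neg h, abs_of_neg (Int.cast_lt_zero.mpr (not_le.1 h))]; ring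
  have := suppFn_le_pair hT hmem a
  rw [pair_add_right, pair_single_right, hval] at this
  linarith

end SupportFunction

section Separation

variable {T : Set (Fin d → ℝ)}

lemma exists_dotProduct_add_le (hconv : Convex ℝ T) (hT : IsCompact T) {y : Fin d → ℝ}
    (hy : y ∉ T) : ∃ φ : Fin d → ℝ, ∃ δ > 0, ∀ x ∈ T, φ ⬝ᵥ y + δ ≤ φ ⬝ᵥ x := by
  obtain ⟨f, u, hfy, hfT⟩ := geometric_hahn_banach_point_closed hconv hT.isClosed hy
  have hf : ∀ v : Fin d → ℝ, f v = (fun j => f (Pi.single j 1)) ⬝ᵥ v := by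
    intro v
    conv_lhs => rw [← Finset.univ_sum_single v]
    simp only [map_sum, dotProduct]
    refine Finset.sum_congr rfl fun j _ => ?_
    have hj : Pi.single j (v j) = v j • (Pi.single j 1 : Fin d → ℝ) := by
      rw [← Pi.single_smul', smul_eq_mul, mul_one]
    rw [hj, map_smul, smul_eq_mul, mul_comm]
  exact ⟨_, u - f y, by linarith, fun x hx => by rw [← hf, ← hf]; linarith [hfT x hx]⟩

lemma abs_pair_round_sub_dotProduct_le (ψ v : Fin d → ℝ) {r : ℝ} (hv : ∀ j, |v j| ≤ r) :
    |pair (fun j => round (ψ j)) v - ψ ⬝ᵥ v| ≤ d * r / 2 := by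
  have hsum : pair (fun j => round (ψ j)) v - ψ ⬝ᵥ v = ∑ j, ((round (ψ j) : ℝ) - ψ j) * v j := by
    simp [pair, dotProduct, ← Finset.sum_sub_distrib, sub_mul]
  rw [hsum]
  calc _ ≤ ∑ j, |((round (ψ j) : ℝ) - ψ j) * v j| := Finset.abs_sum_le_sum_abs _ _
    _ ≤ ∑ _j : Fin d, 1 / 2 * r := Finset.sum_le_sum fun j _ => by
        rw [abs_mul, abs_sub_comm]
        exact mul_le_mul (abs_sub_round _) (hv j) (abs_nonneg _) (by norm_num)
    _ = d * r / 2 := by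
        rw [Finset.sum_const, Finset.card_univ, Fintype.card_fin, nsmul_eq_mul]; ring

/-- Round a large multiple of a real separating functional. -/
lemma exists_int_pair_lt (hconv : Convex ℝ T) (hT : IsCompact T) {y : Fin d → ℝ} (hy : y ∉ T) :
    ∃ a : Fin d → ℤ, ∀ x ∈ T, pair a y < pair a x := by
  obtain ⟨φ, δ, hδ, hφ⟩ := exists_dotProduct_add_le hconv hT hy
  obtain ⟨r, hr⟩ := (Metric.isBounded_iff_subset_closedBall y).1 hT.isBounded
  obtain ⟨N, hN⟩ := exists_nat_gt (d * r / δ)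
  refine ⟨fun j => round (((N : ℝ) • φ) j), fun x hx => ?_⟩
  have hxy : ‖x - y‖ ≤ r := mem_closedBall_iff_norm.1 (hr hx)
  have hround := abs_pair_round_sub_dotProduct_le ((N : ℝ) • φ) (x - y)
    fun j => (norm_le_pi_norm (x - y) j).trans hxy
  have hφN : N * δ ≤ ((N : ℝ) • φ) ⬝ᵥ (x - y) := by
    rw [smul_dotProduct, dotProduct_sub, smul_eq_mul]
    gcongr
    linarith [hφ x hx]
  have hNδ : d * r < N * δ := (div_lt_iff₀ hδ).1 hN
  have hdr : 0 ≤ d * r := mul_nonneg d.cast_nonneg ((norm_nonneg _).trans hxy)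
  rw [← sub_pos, ← pair_sub_right]
  linarith [(abs_le.1 hround).1]

end Separation

section FineAdjoint

variable {T : Set (Fin d → ℝ)}

lemma nonempty_of_affineSpan_eq_top (hfd : affineSpan ℝ T = ⊤) : T.Nonempty :=
  (affineSpan_nonempty (k := ℝ)).1 (by rw [hfd]; exact ⟨0, trivial⟩)

lemma fineAdjoint_antitone (T : Set (Fin d → ℝ)) : Antitone (fineAdjoint T) :=
  fun _ _ hst _ hx a ha => by linarith [hx a ha]

lemma isClosed_fineAdjoint (T : Set (Fin d → ℝ)) (s : ℝ) : IsClosed (fineAdjoint T s) := by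
  simp only [fineAdjoint, Set.ofPred_forall]
  exact isClosed_iInter fun a => isClosed_iInter fun _ =>
    isClosed_le continuous_const (continuous_pair a)

lemma fineAdjoint_subset (hconv : Convex ℝ T) (hT : IsCompact T) (hne : T.Nonempty) {s : ℝ}
    (hs : 0 < s) : fineAdjoint T s ⊆ T := by
  intro y hy
  by_contra hyT
  obtain ⟨a, ha⟩ := exists_int_pair_lt hconv hT hyT
  have ha0 : a ≠ 0 := by
    rintro rfl
    obtain ⟨x, hx⟩ := hne
    simpa [pair_zero_left] using ha x hx
  linarith [hy a ha0, le_suppFn hne fun x hx => (ha x hx).le]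

lemma isCompact_fineAdjoint (hconv : Convex ℝ T) (hT : IsCompact T) (hne : T.Nonempty) {s : ℝ}
    (hs : 0 < s) : IsCompact (fineAdjoint T s) :=
  hT.of_isClosed_subset (isClosed_fineAdjoint T s) (fineAdjoint_subset hconv hT hne hs)

lemma bddAbove_fineAdjoint_nonempty [NeZero d] (T : Set (Fin d → ℝ)) :
    BddAbove {s : ℝ | 0 < s ∧ (fineAdjoint T s).Nonempty} := by
  set e : Fin d → ℤ := Pi.single 0 1
  have he : e ≠ 0 := by simp [e]
  refine ⟨-(suppFn T e + suppFn T (-e)) / 2, ?_⟩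
  rintro s ⟨-, x, hx⟩
  have h₁ := hx e he
  have h₂ := hx (-e) (neg_ne_zero.2 he)
  rw [pair_neg_left] at h₂
  linarith

lemma le_fineNumber [NeZero d] {s : ℝ} (hs : 0 < s) {x : Fin d → ℝ} (hx : x ∈ fineAdjoint T s) :
    s ≤ fineNumber T :=
  le_csSup (bddAbove_fineAdjoint_nonempty T) ⟨hs, x, hx⟩

lemma fineNumber_le {c : ℝ} (hne : ∃ s > 0, (fineAdjoint T s).Nonempty)
    (h : ∀ s > 0, ∀ x ∈ fineAdjoint T s, s ≤ c) : fineNumber T ≤ c := by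
  obtain ⟨s, hs, hsne⟩ := hne
  refine csSup_le ⟨s, hs, hsne⟩ ?_
  rintro t ⟨ht, x, hx⟩
  exact h t ht x hx

lemma mem_fineAdjoint_of_closedBall_subset (hT : IsCompact T) {z : Fin d → ℝ} {ρ : ℝ}
    (hz : Metric.closedBall z ρ ⊆ T) (hρ : 0 ≤ ρ) : z ∈ fineAdjoint T ρ := by
  intro a ha
  obtain ⟨i, hi⟩ := Function.ne_iff.1 ha
  have h₁ : (1 : ℝ) ≤ |(a i : ℝ)| := by exact_mod_cast Int.one_le_abs hi
  linarith [suppFn_add_mul_abs_le hT hz hρ a i, mul_le_mul_of_nonneg_left h₁ hρ]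

lemma exists_fineAdjoint_nonempty (hT : IsCompact T) (hconv : Convex ℝ T)
    (hfd : affineSpan ℝ T = ⊤) : ∃ s > 0, (fineAdjoint T s).Nonempty := by
  obtain ⟨z, ρ, hρ, hz⟩ := exists_closedBall_subset hconv hfd
  exact ⟨ρ, hρ, z, mem_fineAdjoint_of_closedBall_subset hT hz hρ.le⟩

lemma fineNumber_pos [NeZero d] (hT : IsCompact T) (hconv : Convex ℝ T)
    (hfd : affineSpan ℝ T = ⊤) : 0 < fineNumber T := by
  obtain ⟨s, hs, x, hx⟩ := exists_fineAdjoint_nonempty hT hconv hfd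
  exact hs.trans_le (le_fineNumber hs hx)

/-- The core is the intersection of the nested nonempty compact sets `T^{F(s)}`,
`0 < s < n^F(T)`. -/
lemma fineCore_nonempty [NeZero d] (hT : IsCompact T) (hconv : Convex ℝ T)
    (hfd : affineSpan ℝ T = ⊤) : (fineCore T).Nonempty := by
  set n := fineNumber T
  have hn : 0 < n := fineNumber_pos hT hconv hfd
  have hne := nonempty_of_affineSpan_eq_top hfd
  have : Nonempty (Set.Ioo 0 n) := ⟨⟨n / 2, by constructor <;> linarith⟩⟩
  obtain ⟨x, hx⟩ := IsCompact.nonempty_iInter_of_directed_nonempty_isCompact_isClosed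
    (fun t : Set.Ioo 0 n => fineAdjoint T t)
    ((fineAdjoint_antitone T).comp_monotone (Subtype.mono_coe _)).directed_ge
    (fun t => by
      obtain ⟨s, ⟨-, hs⟩, hts⟩ :=
        exists_lt_of_lt_csSup (exists_fineAdjoint_nonempty hT hconv hfd) t.2.2
      exact hs.mono (fineAdjoint_antitone T hts.le))
    (fun t => isCompact_fineAdjoint hconv hT hne t.2.1) (fun t => isClosed_fineAdjoint T t)
  rw [Set.mem_iInter] at hx
  refine ⟨x, fun a ha => ?_⟩
  suffices n ≤ pair a x - suppFn T a by linarith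
  refine le_of_forall_lt_imp_le_of_dense fun t ht => ?_
  have hmem : max t (n / 2) ∈ Set.Ioo 0 n := ⟨by positivity, max_lt ht (by linarith)⟩
  have := hx ⟨_, hmem⟩ a ha
  linarith [le_max_left t (n / 2)]

end FineAdjoint

section CoreDirection

lemma exists_pos_le_abs_pair (w : Fin d → ℝ) (R : ℝ) :
    ∃ c > 0, ∀ a : Fin d → ℤ, (∀ i, |(a i : ℝ)| ≤ R) → pair a w ≠ 0 → c ≤ |pair a w| := by
  set S := {a : Fin d → ℤ | (∀ i, |(a i : ℝ)| ≤ R) ∧ pair a w ≠ 0}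
  have hS : S.Finite := by
    refine (Set.finite_Icc (fun _ => -⌈R⌉) fun _ => ⌈R⌉).subset fun a ha => ?_
    have hb := fun i => abs_le.1 ((ha.1 i).trans (Int.le_ceil R))
    exact ⟨fun i => by exact_mod_cast (hb i).1, fun i => by exact_mod_cast (hb i).2⟩
  rcases S.eq_empty_or_nonempty with hS₀ | hSne
  · refine ⟨1, one_pos, fun a ha hw => ?_⟩
    exact absurd (show a ∈ S from ⟨ha, hw⟩) (hS₀ ▸ Set.notMem_empty a)
  · obtain ⟨a₀, ⟨-, ha₀⟩, hmin⟩ := S.exists_min_image (fun a => |pair a w|) hS hSne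
    exact ⟨_, abs_pos.2 ha₀, fun a ha hw => hmin a ⟨ha, hw⟩⟩

lemma add_le_pair_add_add {α β γ h A B C : ℝ} (hα : 0 ≤ α) (hβ : 0 ≤ β) (hγ : 0 ≤ γ)
    (hsum : α + β + γ = 1) {a : Fin d → ℤ} {p m z : Fin d → ℝ} (hA : h + A ≤ pair a p)
    (hB : h + B ≤ pair a m) (hC : h + C ≤ pair a z) :
    h + (α * A + β * B + γ * C) ≤ pair a (α • p + β • m + γ • z) := by
  simp only [pair_add_right, pair_smul_right]
  linear_combination mul_le_mul_of_nonneg_left hA hα + mul_le_mul_of_nonneg_left hB hβ +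
    mul_le_mul_of_nonneg_left hC hγ + (-h) * hsum

lemma add_abs_pair_sub_le_pair_midpoint {T : Set (Fin d → ℝ)} {n : ℝ} {x y : Fin d → ℝ}
    (hx : x ∈ fineAdjoint T n) (hy : y ∈ fineAdjoint T n) {a : Fin d → ℤ} (ha : a ≠ 0) :
    suppFn T a + n + |pair a (y - x)| / 2 ≤ pair a ((1 / 2 : ℝ) • (x + y)) := by
  have hxa := hx a ha
  have hya := hy a ha
  rw [pair_smul_right, pair_add_right, pair_sub_right]
  rcases abs_cases (pair a y - pair a x) with ⟨habs, -⟩ | ⟨habs, -⟩ <;> rw [habs] <;> linarith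

/-- The weights of the convex combination in `le_fineNumber_of_core_direction`; the point is
that `K` can be fixed before `c` is known. -/
lemma exists_mixing_weights {n s : ℝ} (hn : 0 < n) (hs : n < s) :
    ∃ K : ℝ, ∀ c > 0, ∃ α β γ : ℝ, 0 ≤ α ∧ 0 ≤ β ∧ 0 ≤ γ ∧ α + β + γ = 1 ∧
      n < α * s + β * n ∧ n < β * n + γ * K ∧ n < β * (n + c) := by
  have hsn : 0 < s - n := sub_pos.2 hs
  have hs₀ : 0 < s := hn.trans hs
  have : s - n ≠ 0 := hsn.ne'
  refine ⟨2 * n * (s + n) / (s - n), fun c hc => ?_⟩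
  refine ⟨c * n / ((s + n) * (n + c)), (2 * n + c) / (2 * (n + c)),
    c * (s - n) / (2 * (s + n) * (n + c)), by positivity, by positivity,
    div_nonneg (mul_nonneg hc.le hsn.le) (by positivity), ?_, ?_, ?_, ?_⟩
  · field_simp; ring
  · have : c * n / ((s + n) * (n + c)) * s + (2 * n + c) / (2 * (n + c)) * n - n =
        c * n * (s - n) / (2 * (s + n) * (n + c)) := by field_simp; ring
    have : 0 < c * n * (s - n) / (2 * (s + n) * (n + c)) := by positivity
    linarith
  · have : (2 * n + c) / (2 * (n + c)) * n + c * (s - n) / (2 * (s + n) * (n + c)) *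
        (2 * n * (s + n) / (s - n)) - n = c * n / (2 * (n + c)) := by field_simp; ring
    have : 0 < c * n / (2 * (n + c)) := by positivity
    linarith
  · have : (2 * n + c) / (2 * (n + c)) * (n + c) = n + c / 2 := by field_simp
    linarith

/-- If `s > n^F(T)`, a convex combination of `p`, the midpoint of `[x, y]` and an interior
point would lie in `T^{F(t)}` for some `t > n^F(T)`: functionals constant along `[x, y]` gain
from `p`, those with a large coefficient gain from the interior point, and the finitely many
others gain from the midpoint. -/
lemma le_fineNumber_of_core_direction [NeZero d] {T : Set (Fin d → ℝ)} (hT : IsCompact T)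
    (hconv : Convex ℝ T) (hfd : affineSpan ℝ T = ⊤) {x y p : Fin d → ℝ} (hx : x ∈ fineCore T)
    (hy : y ∈ fineCore T) (hp : p ∈ T) {s : ℝ}
    (hps : ∀ a : Fin d → ℤ, a ≠ 0 → pair a (y - x) = 0 → suppFn T a + s ≤ pair a p) :
    s ≤ fineNumber T := by
  set n := fineNumber T
  by_contra! hsn
  have hn : 0 < n := fineNumber_pos hT hconv hfd
  obtain ⟨z, ρ, hρ, hz⟩ := exists_closedBall_subset hconv hfd
  obtain ⟨K, hK⟩ := exists_mixing_weights hn hsn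
  obtain ⟨c, hc, hcw⟩ := exists_pos_le_abs_pair (y - x) (K / ρ)
  obtain ⟨α, β, γ, hα, hβ, hγ, hsum, h₁, h₂, h₃⟩ := hK (c / 2) (by positivity)
  set m : Fin d → ℝ := (1 / 2 : ℝ) • (x + y)
  set t := min (α * s + β * n) (min (β * n + γ * K) (β * (n + c / 2)))
  have hq : α • p + β • m + γ • z ∈ fineAdjoint T t := by
    intro a ha
    have hpa : suppFn T a ≤ pair a p := suppFn_le_pair hT hp a
    have hz₀ : suppFn T a ≤ pair a z :=
      suppFn_le_pair hT (hz (Metric.mem_closedBall_self hρ.le)) a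
    have hma : suppFn T a + n + |pair a (y - x)| / 2 ≤ pair a m :=
      add_abs_pair_sub_le_pair_midpoint hx hy ha
    have hw₀ := abs_nonneg (pair a (y - x))
    have hmin₁ := min_le_left (α * s + β * n) (min (β * n + γ * K) (β * (n + c / 2)))
    have hmin₂ := min_le_left (β * n + γ * K) (β * (n + c / 2))
    have hmin₃ := min_le_right (β * n + γ * K) (β * (n + c / 2))
    have hmin := min_le_right (α * s + β * n) (min (β * n + γ * K) (β * (n + c / 2)))
    by_cases hw : pair a (y - x) = 0
    · have := add_le_pair_add_add hα hβ hγ hsum (hps a ha hw)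
        (show suppFn T a + n ≤ pair a m by linarith) (show suppFn T a + 0 ≤ pair a z by linarith)
      linarith
    by_cases hbig : ∃ i, K / ρ < |(a i : ℝ)|
    · obtain ⟨i, hi⟩ := hbig
      have hKi : K ≤ ρ * |(a i : ℝ)| := by rw [div_lt_iff₀ hρ] at hi; linarith
      have := add_le_pair_add_add hα hβ hγ hsum (show suppFn T a + 0 ≤ pair a p by linarith)
        (show suppFn T a + n ≤ pair a m by linarith)
        (show suppFn T a + K ≤ pair a z by linarith [suppFn_add_mul_abs_le hT hz hρ.le a i])
      linarith
    · push Not at hbig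
      have := add_le_pair_add_add hα hβ hγ hsum (show suppFn T a + 0 ≤ pair a p by linarith)
        (show suppFn T a + (n + c / 2) ≤ pair a m by linarith [hcw a hbig hw])
        (show suppFn T a + 0 ≤ pair a z by linarith)
      linarith
  have ht : n < t := lt_min h₁ (lt_min h₂ h₃)
  exact ht.not_ge (le_fineNumber (hn.trans ht) hq)

end CoreDirection

section LatticeProjection

def castMulVec (M : Matrix (Fin k) (Fin d) ℤ) : (Fin d → ℝ) →ₗ[ℝ] Fin k → ℝ :=
  (M.map (Int.cast : ℤ → ℝ)).mulVecLin

lemma castMulVec_apply (M : Matrix (Fin k) (Fin d) ℤ) (x : Fin d → ℝ) (i : Fin k) :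
    castMulVec M x i = pair (M i) x := rfl

lemma pair_castMulVec (M : Matrix (Fin k) (Fin d) ℤ) (a : Fin k → ℤ) (x : Fin d → ℝ) :
    pair a (castMulVec M x) = pair (a ᵥ* M) x := by
  simp only [pair_eq_dotProduct, castMulVec, mulVecLin_apply, dotProduct_mulVec]
  congr 1
  funext j
  exact ((Int.castRingHom ℝ).map_vecMul M a j).symm

lemma suppFn_image_castMulVec (M : Matrix (Fin k) (Fin d) ℤ) (T : Set (Fin d → ℝ))
    (a : Fin k → ℤ) : suppFn (castMulVec M '' T) a = suppFn T (a ᵥ* M) := by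
  simp only [suppFn, Set.image_image, pair_castMulVec]

lemma castMulVec_mem_fineAdjoint {M : Matrix (Fin k) (Fin d) ℤ}
    (hM : Function.Injective (· ᵥ* M)) {T : Set (Fin d → ℝ)} {s : ℝ} {x : Fin d → ℝ}
    (hx : x ∈ fineAdjoint T s) : castMulVec M x ∈ fineAdjoint (castMulVec M '' T) s := by
  intro a ha
  rw [suppFn_image_castMulVec, pair_castMulVec]
  exact hx _ fun h => ha (hM (h.trans (zero_vecMul M).symm))

lemma surjective_castMulVec_of_basis (b : Module.Basis (Fin d) ℤ (Fin d → ℤ))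
    (g : Fin k ↪ Fin d) : Function.Surjective (castMulVec (Matrix.of fun i => b (g i))) := by
  have hinj : Function.Injective (castMulVec (Matrix.of b)) := by
    rw [← LinearMap.ker_eq_bot, LinearMap.ker_eq_bot']
    intro x hx
    exact eq_zero_of_pairLinear_eq_zero (b.ext (f₂ := 0) fun j => congrFun hx j)
  intro v
  obtain ⟨x, hx⟩ := LinearMap.injective_iff_surjective.1 hinj (Function.extend g v 0)
  refine ⟨x, funext fun i => ?_⟩
  have hxi := congrFun hx (g i)
  rwa [g.injective.extend_apply] at hxi

/-- The integer functionals vanishing on `w ≠ 0` lie in the span of `k` vectors of a basis of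
`ℤ^{k+1}`: by the Smith normal form they lie in the span of some basis vectors, and not all of
them are needed since `ℤ^{k+1}/w^⊥` is not torsion. -/
lemma exists_basis_embedding_span {w : Fin (k + 1) → ℝ} (hw : w ≠ 0) :
    ∃ (b : Module.Basis (Fin (k + 1)) ℤ (Fin (k + 1) → ℤ)) (g : Fin k ↪ Fin (k + 1)),
      ∀ a, pair a w = 0 → a ∈ Submodule.span ℤ (Set.range (b ∘ g)) := by
  obtain ⟨n, snf⟩ :=
    (LinearMap.ker (pairLinear w)).smithNormalForm (Pi.basisFun ℤ (Fin (k + 1)))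
  obtain ⟨j₀, hj₀⟩ : ∃ j₀, j₀ ∉ Set.range snf.f := by
    by_contra! hf
    refine hw (eq_zero_of_pairLinear_eq_zero (snf.bM.ext (f₂ := 0) fun j => ?_))
    obtain ⟨i, rfl⟩ := hf j
    have hi : snf.a i • pairLinear w (snf.bM (snf.f i)) = 0 := by
      rw [← map_smul, ← snf.snf i]
      exact (snf.bN i).2
    have ha : snf.a i ≠ 0 := by
      intro h
      refine snf.bN.ne_zero i (Subtype.ext ?_)
      rw [snf.snf i, h, zero_smul, Submodule.coe_zero]
    exact (smul_eq_zero.1 hi).resolve_left ha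
  set S := Finset.univ.erase j₀
  have hS : S.card = k := by simp [S, Finset.card_erase_of_mem]
  set g : Fin k ↪ Fin (k + 1) := (S.orderEmbOfFin hS).toEmbedding
  have hg : Set.range g = S := Finset.range_orderEmbOfFin S hS
  refine ⟨snf.bM, g, fun a ha => ?_⟩
  have hf : ∀ i, snf.bM (snf.f i) ∈ Submodule.span ℤ (Set.range (snf.bM ∘ g)) := by
    intro i
    have : snf.f i ∈ Set.range g := by
      rw [hg]
      simpa [S] using fun h => hj₀ ⟨i, h⟩
    obtain ⟨l, hl⟩ := this
    exact Submodule.subset_span ⟨l, by simp [hl]⟩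
  have hrepr : ∑ i, ((snf.bN.repr ⟨a, ha⟩ i • snf.bN i : LinearMap.ker (pairLinear w)) :
      Fin (k + 1) → ℤ) = a := by
    rw [← Submodule.coe_sum, snf.bN.sum_repr]
  rw [← hrepr]
  refine Submodule.sum_mem _ fun i _ => ?_
  rw [Submodule.coe_smul, snf.snf i]
  exact Submodule.smul_mem _ _ (Submodule.smul_mem _ _ (hf i))

lemma exists_matrix_of_ne_zero {w : Fin (k + 1) → ℝ} (hw : w ≠ 0) :
    ∃ M : Matrix (Fin k) (Fin (k + 1)) ℤ, Function.Injective (· ᵥ* M) ∧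
      Function.Surjective (castMulVec M) ∧ ∀ a, pair a w = 0 → ∃ a', a' ᵥ* M = a := by
  obtain ⟨b, g, hb⟩ := exists_basis_embedding_span hw
  have hM : ∀ a', a' ᵥ* Matrix.of (fun i => b (g i)) = ∑ i, a' i • b (g i) := fun a' => by
    rw [vecMul_eq_sum]; rfl
  refine ⟨Matrix.of fun i => b (g i), fun a₁ a₂ h => ?_, surjective_castMulVec_of_basis b g,
    fun a ha => ?_⟩
  · have h₀ : ∑ i, (a₁ - a₂) i • b (g i) = 0 := by
      rw [← hM, sub_vecMul, sub_eq_zero]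
      exact h
    exact sub_eq_zero.1 (funext (Fintype.linearIndependent_iff.1
      (b.linearIndependent.comp g g.injective) _ h₀))
  · obtain ⟨c, hc⟩ := (Submodule.mem_span_range_iff_exists_fun ℤ).1 (hb a ha)
    exact ⟨c, (hM c).trans hc⟩

end LatticeProjection

section FineNumberOfImage

variable {T : Set (Fin d → ℝ)} {M : Matrix (Fin k) (Fin d) ℤ}

lemma fineNumber_le_fineNumber_image [NeZero k] (hT : IsCompact T) (hconv : Convex ℝ T)
    (hfd : affineSpan ℝ T = ⊤) (hM : Function.Injective (· ᵥ* M)) :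
    fineNumber T ≤ fineNumber (castMulVec M '' T) :=
  fineNumber_le (exists_fineAdjoint_nonempty hT hconv hfd) fun _ hs _ hx =>
    le_fineNumber hs (castMulVec_mem_fineAdjoint hM hx)

lemma fineNumber_image_le_fineNumber [NeZero d] (hT : IsCompact T) (hconv : Convex ℝ T)
    (hfd : affineSpan ℝ T = ⊤) (hM : Function.Surjective (castMulVec M)) {x y : Fin d → ℝ}
    (hx : x ∈ fineCore T) (hy : y ∈ fineCore T)
    (hxy : ∀ a, pair a (y - x) = 0 → ∃ a', a' ᵥ* M = a) :
    fineNumber (castMulVec M '' T) ≤ fineNumber T := by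
  have hQ : IsCompact (castMulVec M '' T) := hT.image (castMulVec M).continuous_of_finiteDimensional
  have hQconv : Convex ℝ (castMulVec M '' T) := hconv.linear_image _
  have hQfd : affineSpan ℝ (castMulVec M '' T) = ⊤ :=
    (castMulVec M).toAffineMap.span_eq_top_of_surjective hM hfd
  refine fineNumber_le (exists_fineAdjoint_nonempty hQ hQconv hQfd) fun s hs q hq => ?_
  obtain ⟨p, hp, rfl⟩ :=
    fineAdjoint_subset hQconv hQ (nonempty_of_affineSpan_eq_top hQfd) hs hq
  refine le_fineNumber_of_core_direction hT hconv hfd hx hy hp fun a ha haw => ?_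
  obtain ⟨a', rfl⟩ := hxy a haw
  have ha' : a' ≠ 0 := by
    rintro rfl
    exact ha (zero_vecMul M)
  simpa [suppFn_image_castMulVec, pair_castMulVec] using hq a' ha'

end FineNumberOfImage

lemma IsLatticePolytope.isCompact {P : Set (Fin d → ℝ)} (hP : IsLatticePolytope P) :
    IsCompact P := by
  obtain ⟨V, -, -, rfl⟩ := hP
  exact V.finite_toSet.isCompact_convexHull (𝕜 := ℝ)

lemma IsLatticePolytope.convex {P : Set (Fin d → ℝ)} (hP : IsLatticePolytope P) :
    Convex ℝ P := by
  obtain ⟨V, -, -, rfl⟩ := hP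
  exact convex_convexHull ℝ _

lemma IsLatticePolytope.image_castMulVec {P : Set (Fin d → ℝ)} (hP : IsLatticePolytope P)
    (M : Matrix (Fin k) (Fin d) ℤ) : IsLatticePolytope (castMulVec M '' P) := by
  obtain ⟨V, hV, hVint, rfl⟩ := hP
  refine ⟨V.image (castMulVec M), hV.image _, ?_, by
    rw [Finset.coe_image, LinearMap.image_convexHull]⟩
  simp only [Finset.mem_image, forall_exists_index, and_imp]
  rintro _ v hv rfl i
  choose nv hnv using hVint v hv
  exact ⟨∑ j, M i j * nv j, by simp [castMulVec_apply, pair, hnv]⟩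

/-- Projecting along a segment of the Fine core to dimension `k` preserves the Fine number. -/
lemma fineCodeg_mem_fineSpec_of_mem_fineCore [NeZero k] {P : Set (Fin (k + 1) → ℝ)}
    (hP : IsLatticePolytope P) (hfd : IsFullDim P) {x y : Fin (k + 1) → ℝ}
    (hx : x ∈ fineCore P) (hy : y ∈ fineCore P) (hxy : x ≠ y) : fineCodeg P ∈ fineSpec k := by
  obtain ⟨M, hMinj, hMsurj, hMspan⟩ := exists_matrix_of_ne_zero (sub_ne_zero.2 hxy.symm)
  refine ⟨castMulVec M '' P, hP.image_castMulVec M,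
    (castMulVec M).toAffineMap.span_eq_top_of_surjective hMsurj hfd, ?_⟩
  rw [fineCodeg, fineCodeg, le_antisymm
    (fineNumber_le_fineNumber_image hP.isCompact hP.convex hfd hMinj)
    (fineNumber_image_le_fineNumber hP.isCompact hP.convex hfd hMsurj hx hy hMspan)]

/-- new spectrum values in dimension `d` come from polytopes whose
Fine core is a single point. -/
theorem stmt_5 (d : ℕ) (hd : 2 ≤ d) (r : ℝ) (hr : r ∈ fineSpec d \ fineSpec (d - 1)) :
    ∃ P : Set (Fin d → ℝ), IsLatticePolytope P ∧ IsFullDim P ∧ r = fineCodeg P ∧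
      ∃ p : Fin d → ℝ, fineCore P = {p} := by
  obtain ⟨⟨P, hP, hfd, rfl⟩, hlow⟩ := hr
  refine ⟨P, hP, hfd, rfl, ?_⟩
  obtain ⟨k, rfl⟩ : ∃ k, d = k + 1 := ⟨d - 1, by omega⟩
  have : NeZero k := ⟨by omega⟩
  obtain ⟨x, hx⟩ := fineCore_nonempty hP.isCompact hP.convex hfd
  rcases Set.eq_singleton_or_nontrivial hx with hcore | ⟨y, hy, z, hz, hyz⟩
  · exact ⟨x, hcore⟩
  · exact absurd (fineCodeg_mem_fineSpec_of_mem_fineCore hP hfd hy hz hyz) (by simpa using hlow)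
end

section
/- Let d ≥ 2 and let P ⊆ ℝ^d be an exceptional simplex, i.e. a (d-2)-fold lattice pyramid over 2Δ₂ = conv{(0,0), (2,0), (0,2)} ⊆ ℝ². Then μ^F(P) = d - 1/2. -/
open Set

lemma pair_linear {d : ℕ} (a : Fin d → ℤ) : IsLinearMap ℝ (pair a) := by
  constructor
  · intro x y
    simp [pair, Pi.add_apply, mul_add, Finset.sum_add_distrib]
  · intro c x
    simp [pair, Finset.mul_sum]
    congr 1; ext i; ring

lemma hull_pair_ge {d : ℕ} (a : Fin d → ℤ) (c : ℝ) (V : Set (Fin d → ℝ))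
    (hV : ∀ v ∈ V, c ≤ pair a v) : ∀ x ∈ convexHull ℝ V, c ≤ pair a x := by
  intro x hx
  have := convexHull_min (t := {w | c ≤ pair a w}) hV
    (convex_halfSpace_ge (pair_linear a) c)
  exact this hx

lemma le_suppFn_s11 {d : ℕ} (a : Fin d → ℤ) (c : ℝ) (V : Set (Fin d → ℝ))
    (P : Set (Fin d → ℝ)) (hP : P = convexHull ℝ V) (hne : P.Nonempty)
    (hV : ∀ v ∈ V, c ≤ pair a v) : c ≤ suppFn P a := by
  apply le_csInf (hne.image _)
  rintro b ⟨x, hx, rfl⟩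
  exact hull_pair_ge a c V hV x (hP ▸ hx)

lemma suppFn_le {d : ℕ} (a : Fin d → ℤ) {P : Set (Fin d → ℝ)} {v : Fin d → ℝ}
    (hbdd : BddBelow (pair a '' P)) (hv : v ∈ P) : suppFn P a ≤ pair a v :=
  csInf_le hbdd ⟨v, hv, rfl⟩

/-- vertex `w_j`: ones in the last `j` coordinates -/
def wv (m j : ℕ) : Fin (2+m) → ℝ := fun i => if 2+m ≤ (i:ℕ)+j then 1 else 0
def vA (m : ℕ) : Fin (2+m) → ℝ := fun i => (if (i:ℕ) = 0 then 2 else 0) + wv m m i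
def vB (m : ℕ) : Fin (2+m) → ℝ := fun i => (if (i:ℕ) = 1 then 2 else 0) + wv m m i
def verts (m : ℕ) : Set (Fin (2+m) → ℝ) := insert (vA m) (insert (vB m) (wv m '' {j | j ≤ m}))

/-- the snoc-with-1 affine map -/
noncomputable def snocMap (k : ℕ) : (Fin k → ℝ) →ᵃ[ℝ] (Fin (k+1) → ℝ) where
  toFun := fun x => Fin.snoc x 1
  linear := { toFun := fun x => Fin.snoc x 0
              map_add' := by
                intro x y; funext i
                induction i using Fin.lastCases with
                | last => simp
                | cast i => simp
              map_smul' := by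
                intro c x; funext i
                induction i using Fin.lastCases with
                | last => simp
                | cast i => simp }
  map_vadd' := by
    intro p v; funext i
    induction i using Fin.lastCases with
    | last => simp
    | cast i => simp

lemma pyrSet_hull {k : ℕ} (S : Set (Fin k → ℝ)) :
    pyrSet (convexHull ℝ S) = convexHull ℝ ((fun x => Fin.snoc x (1:ℝ)) '' S ∪ {0}) := by
  unfold pyrSet
  rw [show (fun x => Fin.snoc x (1:ℝ)) '' convexHull ℝ S = (snocMap k) '' convexHull ℝ S from rfl,
    AffineMap.image_convexHull, convexHull_convexHull_union_left]
  rfl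

lemma iterPyr_eq (m : ℕ) : iterPyr m = convexHull ℝ (verts m) := by
  induction m with
  | zero =>
    have h0 : (![0,0] : Fin 2 → ℝ) = wv 0 0 := by
      funext i; fin_cases i <;> simp [wv]
    have h1 : (![2,0] : Fin 2 → ℝ) = vA 0 := by
      funext i; fin_cases i <;> simp [vA, wv]
    have h2 : (![0,2] : Fin 2 → ℝ) = vB 0 := by
      funext i; fin_cases i <;> simp [vB, wv]
    show twoDelta2 = _
    unfold twoDelta2 verts
    rw [h0, h1, h2]
    congr 1
    ext x
    simp only [Set.mem_insert_iff, Set.mem_singleton_iff, Set.mem_image, Set.mem_setOf_eq]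
    constructor
    · rintro (h | h | h)
      · right; right; exact ⟨0, le_refl 0, h.symm⟩
      · left; exact h
      · right; left; exact h
    · rintro (h | h | ⟨j, hj, hw⟩)
      · right; left; exact h
      · right; right; exact h
      · left; interval_cases j; exact hw.symm
  | succ m ih =>
    show pyrSet (iterPyr m) = _
    rw [ih, pyrSet_hull]
    congr 1
    have hA : Fin.snoc (vA m) (1:ℝ) = vA (m+1) := by
      funext i
      induction i using Fin.lastCases with
      | last =>
        rw [Fin.snoc_last]
        simp only [vA, wv, Fin.last]
        rw [if_neg (by simp only [Nat.add_eq]; omega), if_pos (by simp only [Nat.add_eq]; omega)]; norm_num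
      | cast i =>
        rw [Fin.snoc_castSucc]
        simp only [vA, wv, Fin.coe_castSucc]
        congr 1
        exact if_congr (by omega) rfl rfl
    have hB : Fin.snoc (vB m) (1:ℝ) = vB (m+1) := by
      funext i
      induction i using Fin.lastCases with
      | last =>
        rw [Fin.snoc_last]
        simp only [vB, wv, Fin.last]
        rw [if_neg (by simp only [Nat.add_eq]; omega), if_pos (by simp only [Nat.add_eq]; omega)]; norm_num
      | cast i =>
        rw [Fin.snoc_castSucc]
        simp only [vB, wv, Fin.coe_castSucc]
        congr 1
        exact if_congr (by omega) rfl rfl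
    have hW : ∀ j, Fin.snoc (wv m j) (1:ℝ) = wv (m+1) (j+1) := by
      intro j; funext i
      induction i using Fin.lastCases with
      | last =>
        rw [Fin.snoc_last]
        simp only [wv, Fin.last]
        rw [if_pos (by simp only [Nat.add_eq]; omega)]
      | cast i =>
        rw [Fin.snoc_castSucc]
        simp only [wv, Fin.coe_castSucc]
        exact if_congr (by omega) rfl rfl
    have h0 : (0 : Fin (2+(m+1)) → ℝ) = wv (m+1) 0 := by
      funext i; have hi := i.isLt
      simp only [wv, Pi.zero_apply]
      rw [if_neg (by omega)]
    ext x
    simp only [verts, Set.image_union, Set.image_insert_eq, Set.image_image,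
      Set.mem_union, Set.mem_insert_iff, Set.mem_singleton_iff, Set.mem_image,
      Set.mem_setOf_eq]
    constructor
    · rintro ((h | h | ⟨j, hj, hw⟩) | h)
      · left; rw [← hA]; exact h
      · right; left; rw [← hB]; exact h
      · right; right; exact ⟨j+1, by omega, by rw [← hW j]; exact hw⟩
      · right; right; exact ⟨0, by omega, by rw [← h0]; exact h.symm⟩
    · rintro (h | h | ⟨j, hj, hw⟩)
      · left; left; rw [hA]; exact h
      · left; right; left; rw [hB]; exact h
      · cases j with
        | zero => right; rw [← hw, ← h0]
        | succ j' => left; right; right; exact ⟨j', by omega, by rw [hW j']; exact hw⟩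

section Pairs
variable {m : ℕ}

def i0 (m : ℕ) : Fin (2+m) := ⟨0, by omega⟩
def i1 (m : ℕ) : Fin (2+m) := ⟨1, by omega⟩

/-- suffix sum `S_j = ∑_{i ≥ 2+m-j} a i` -/
def Ssum (m : ℕ) (a : Fin (2+m) → ℤ) (j : ℕ) : ℤ :=
  ∑ i ∈ Finset.univ.filter (fun i : Fin (2+m) => 2+m ≤ (i:ℕ)+j), a i

lemma pair_wv (a : Fin (2+m) → ℤ) (j : ℕ) : pair a (wv m j) = ((Ssum m a j : ℤ) : ℝ) := by
  unfold pair wv Ssum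
  push_cast
  rw [Finset.sum_filter]
  apply Finset.sum_congr rfl
  intro i _
  by_cases h : 2+m ≤ (i:ℕ)+j <;> simp [h]

lemma pair_vA (a : Fin (2+m) → ℤ) :
    pair a (vA m) = 2 * (a (i0 m) : ℝ) + ((Ssum m a m : ℤ) : ℝ) := by
  unfold pair vA
  rw [show (∑ i, (a i : ℝ) * ((if (i:ℕ) = 0 then 2 else 0) + wv m m i))
      = (∑ i, (a i : ℝ) * (if (i:ℕ) = 0 then 2 else 0)) + ∑ i, (a i : ℝ) * wv m m i by
    rw [← Finset.sum_add_distrib]; apply Finset.sum_congr rfl; intro i _; ring]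
  have h1 : (∑ i, (a i : ℝ) * (if (i:ℕ) = 0 then 2 else 0)) = 2 * (a (i0 m) : ℝ) := by
    rw [show (∑ i, (a i : ℝ) * (if (i:ℕ) = 0 then 2 else 0))
        = ∑ i, (if i = i0 m then 2 * (a i : ℝ) else 0) by
      apply Finset.sum_congr rfl; intro i _
      by_cases h : i = i0 m
      · subst h; simp [i0]; ring
      · have : ¬ ((i:ℕ) = 0) := by
          intro hc; apply h; apply Fin.ext; simpa [i0] using hc
        simp [h, this]]
    rw [Finset.sum_ite_eq' Finset.univ (i0 m) (fun i => 2 * (a i : ℝ))]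
    simp
  rw [h1, ← pair_wv a m]
  rfl

lemma pair_vB (a : Fin (2+m) → ℤ) :
    pair a (vB m) = 2 * (a (i1 m) : ℝ) + ((Ssum m a m : ℤ) : ℝ) := by
  unfold pair vB
  rw [show (∑ i, (a i : ℝ) * ((if (i:ℕ) = 1 then 2 else 0) + wv m m i))
      = (∑ i, (a i : ℝ) * (if (i:ℕ) = 1 then 2 else 0)) + ∑ i, (a i : ℝ) * wv m m i by
    rw [← Finset.sum_add_distrib]; apply Finset.sum_congr rfl; intro i _; ring]
  have h1 : (∑ i, (a i : ℝ) * (if (i:ℕ) = 1 then 2 else 0)) = 2 * (a (i1 m) : ℝ) := by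
    rw [show (∑ i, (a i : ℝ) * (if (i:ℕ) = 1 then 2 else 0))
        = ∑ i, (if i = i1 m then 2 * (a i : ℝ) else 0) by
      apply Finset.sum_congr rfl; intro i _
      by_cases h : i = i1 m
      · subst h; simp [i1]; ring
      · have : ¬ ((i:ℕ) = 1) := by
          intro hc; apply h; apply Fin.ext; simpa [i1] using hc
        simp [h, this]]
    rw [Finset.sum_ite_eq' Finset.univ (i1 m) (fun i => 2 * (a i : ℝ))]
    simp
  rw [h1, ← pair_wv a m]
  rfl

end Pairs

section Key
variable {m : ℕ}

def Npair (m : ℕ) (a : Fin (2+m) → ℤ) : ℤ :=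
  2 * a (i0 m) + 2 * a (i1 m) +
    ∑ i ∈ Finset.univ.filter (fun i : Fin (2+m) => 2 ≤ (i:ℕ)), (2*((i:ℕ):ℤ) - 1) * a i

lemma Ssum_zero (a : Fin (2+m) → ℤ) : Ssum m a 0 = 0 := by
  unfold Ssum
  rw [Finset.filter_eq_empty_iff.mpr, Finset.sum_empty]
  intro i _
  have := i.isLt
  omega

lemma Ssum_rec (a : Fin (2+m) → ℤ) (k : ℕ) (hk : k ≤ m) :
    Ssum m a (k+1) = a ⟨1+m-k, by omega⟩ + Ssum m a k := by
  unfold Ssum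
  have hfil : Finset.univ.filter (fun i : Fin (2+m) => 2+m ≤ (i:ℕ)+(k+1)) =
      insert (⟨1+m-k, by omega⟩ : Fin (2+m))
        (Finset.univ.filter (fun i : Fin (2+m) => 2+m ≤ (i:ℕ)+k)) := by
    ext i
    simp only [Finset.mem_filter, Finset.mem_univ, true_and, Finset.mem_insert, Fin.ext_iff]
    omega
  rw [hfil, Finset.sum_insert]
  simp only [Finset.mem_filter, Finset.mem_univ, true_and]
  omega

lemma Ssum_m (a : Fin (2+m) → ℤ) :
    Ssum m a m = ∑ i ∈ Finset.univ.filter (fun i : Fin (2+m) => 2 ≤ (i:ℕ)), a i := by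
  unfold Ssum
  apply Finset.sum_congr _ (fun _ _ => rfl)
  ext i
  simp only [Finset.mem_filter, Finset.mem_univ, true_and]
  omega

lemma Npair_ident (a : Fin (2+m) → ℤ) :
    Npair m a = (2*a (i0 m) + Ssum m a m) + (2*a (i1 m) + Ssum m a m) + Ssum m a m
      + 2 * ∑ k ∈ Finset.range m, Ssum m a k := by
  have hsum : ∑ k ∈ Finset.range m, Ssum m a k
      = ∑ i : Fin (2+m), (((Finset.range m).filter (fun k => 2+m ≤ (i:ℕ)+k)).card : ℤ) * a i := by
    unfold Ssum
    rw [show (∑ k ∈ Finset.range m, ∑ i ∈ Finset.univ.filter (fun i : Fin (2+m) => 2+m ≤ (i:ℕ)+k), a i)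
        = ∑ k ∈ Finset.range m, ∑ i : Fin (2+m), (if 2+m ≤ (i:ℕ)+k then a i else 0) by
      apply Finset.sum_congr rfl; intro k _; rw [Finset.sum_filter]]
    rw [Finset.sum_comm]
    apply Finset.sum_congr rfl
    intro i _
    rw [← Finset.sum_filter, Finset.sum_const, nsmul_eq_mul]
  have hcard : ∀ i : Fin (2+m),
      (((Finset.range m).filter (fun k => 2+m ≤ (i:ℕ)+k)).card : ℤ) = ((i:ℕ) : ℤ) - 2
        ∨ ((i:ℕ) < 2 ∧ ((Finset.range m).filter (fun k => 2+m ≤ (i:ℕ)+k)).card = 0) := by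
    intro i
    have hic := i.isLt
    have hfil : (Finset.range m).filter (fun k => 2+m ≤ (i:ℕ)+k) = Finset.Ico (2+m-(i:ℕ)) m := by
      ext k
      simp only [Finset.mem_filter, Finset.mem_range, Finset.mem_Ico]
      omega
    rw [hfil, Nat.card_Ico]
    by_cases h2 : 2 ≤ (i:ℕ)
    · left; omega
    · right; exact ⟨by omega, by omega⟩
  rw [Npair, hsum, Ssum_m]
  have hco : ∀ i : Fin (2+m),
      (((Finset.range m).filter (fun k => 2+m ≤ (i:ℕ)+k)).card : ℤ) * a i
        = if 2 ≤ (i:ℕ) then (((i:ℕ):ℤ) - 2) * a i else 0 := by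
    intro i
    rcases hcard i with h | ⟨h1, h2⟩
    · rw [h]
      by_cases h2 : 2 ≤ (i:ℕ)
      · rw [if_pos h2]
      · have hfil : (Finset.range m).filter (fun k => 2+m ≤ (i:ℕ)+k) = ∅ := by
          rw [Finset.filter_eq_empty_iff]
          intro k hk
          simp only [Finset.mem_range] at hk
          omega
        rw [if_neg h2, ← h, hfil]
        simp
    · rw [h2, if_neg (by omega)]
      simp
  rw [Finset.sum_congr rfl (fun i _ => hco i), ← Finset.sum_filter]
  rw [show (∑ i ∈ Finset.univ.filter (fun i : Fin (2+m) => 2 ≤ (i:ℕ)), (2*((i:ℕ):ℤ) - 1) * a i)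
      = (∑ i ∈ Finset.univ.filter (fun i : Fin (2+m) => 2 ≤ (i:ℕ)), (3 * a i + 2*((((i:ℕ):ℤ) - 2) * a i)))
      from Finset.sum_congr rfl (fun i _ => by ring)]
  rw [Finset.sum_add_distrib, ← Finset.mul_sum, ← Finset.mul_sum]
  ring

/-- the minimum of `⟨a,v⟩` over the vertices, as an integer -/
def μval (m : ℕ) (a : Fin (2+m) → ℤ) : ℤ :=
  min (2*a (i0 m) + Ssum m a m) (min (2*a (i1 m) + Ssum m a m)
    ((Finset.range (m+1)).inf' ⟨0, by simp⟩ (Ssum m a)))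

lemma μval_le_S (a : Fin (2+m) → ℤ) (k : ℕ) (hk : k ≤ m) : μval m a ≤ Ssum m a k := by
  refine le_trans (min_le_right _ _) (le_trans (min_le_right _ _) ?_)
  exact Finset.inf'_le _ (Finset.mem_range.mpr (by omega))

lemma key (a : Fin (2+m) → ℤ) (ha : a ≠ 0) :
    (2*(m:ℤ)+3) * μval m a + 2 ≤ Npair m a := by
  set μ := μval m a with hμdef
  have hμ1 : μ ≤ 2*a (i0 m) + Ssum m a m := min_le_left _ _
  have hμ2 : μ ≤ 2*a (i1 m) + Ssum m a m := le_trans (min_le_right _ _) (min_le_left _ _)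
  set A1 := 2*a (i0 m) + Ssum m a m - μ with hA1def
  set A2 := 2*a (i1 m) + Ssum m a m - μ with hA2def
  set A3 := Ssum m a m - μ with hA3def
  set C := ∑ k ∈ Finset.range m, (Ssum m a k - μ) with hCdef
  have hf : Npair m a - (2*(m:ℤ)+3) * μ = A1 + A2 + A3 + 2*C := by
    rw [Npair_ident a, hCdef, Finset.sum_sub_distrib, Finset.sum_const, Finset.card_range]
    push_cast
    ring
  have hA1 : 0 ≤ A1 := by omega
  have hA2 : 0 ≤ A2 := by omega
  have hA3 : 0 ≤ A3 := sub_nonneg.mpr (μval_le_S a m le_rfl)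
  have hCk : ∀ k ∈ Finset.range m, 0 ≤ Ssum m a k - μ := fun k hk =>
    sub_nonneg.mpr (μval_le_S a k (Nat.le_of_lt (Finset.mem_range.mp hk)))
  have hC : 0 ≤ C := Finset.sum_nonneg hCk
  by_contra hcon
  push_neg at hcon
  have hle1 : A1 + A2 + A3 + 2*C ≤ 1 := by omega
  have haux1 : A1 - A3 = 2 * a (i0 m) := by ring
  have haux2 : A2 - A3 = 2 * a (i1 m) := by ring
  have hzero : A1 = 0 ∧ A2 = 0 ∧ A3 = 0 ∧ C = 0 := by omega
  obtain ⟨hz1, hz2, hz3, hz4⟩ := hzero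
  have hSk : ∀ k, k ≤ m → Ssum m a k = μ := by
    intro k hk
    rcases Nat.lt_or_ge k m with h | h
    · have := (Finset.sum_eq_zero_iff_of_nonneg hCk).mp hz4 k (Finset.mem_range.mpr h)
      omega
    · have : k = m := by omega
      subst this; omega
  have hμ0 : μ = 0 := by
    have := hSk 0 (by omega)
    rw [Ssum_zero] at this
    omega
  have ha0 : a (i0 m) = 0 := by have := hSk m le_rfl; omega
  have ha1 : a (i1 m) = 0 := by have := hSk m le_rfl; omega
  apply ha
  funext i
  show a i = 0
  have hic := i.isLt
  by_cases h2 : 2 ≤ (i:ℕ)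
  · have hkm : 1+m-(i:ℕ) ≤ m := by omega
    have hrec := Ssum_rec a (1+m-(i:ℕ)) hkm
    rw [hSk _ (by omega), hSk _ hkm] at hrec
    have : (⟨1+m-(1+m-(i:ℕ)), by omega⟩ : Fin (2+m)) = i := by
      apply Fin.ext; simp; omega
    rw [this] at hrec
    omega
  · have h01 : (i:ℕ) = 0 ∨ (i:ℕ) = 1 := by omega
    rcases h01 with h | h
    · have : i = i0 m := by apply Fin.ext; simpa [i0] using h
      rw [this, ha0]
    · have : i = i1 m := by apply Fin.ext; simpa [i1] using h
      rw [this, ha1]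

end Key

section Core
variable {m : ℕ}

noncomputable def xstar (m : ℕ) : Fin (2+m) → ℝ :=
  fun i => (if (i:ℕ) ≤ 1 then 2 else 2*((i:ℕ):ℝ) - 1) / (2*m+3)

lemma i0_ne_i1 : i0 m ≠ i1 m := by
  intro h
  have := Fin.mk.injEq 0 (by omega : 0 < 2+m) 1 (by omega : 1 < 2+m)
  simp [i0, i1, Fin.ext_iff] at h

lemma pair_xstar (a : Fin (2+m) → ℤ) :
    pair a (xstar m) = (Npair m a : ℝ) / (2*m+3) := by
  unfold pair xstar
  rw [show (∑ i, (a i : ℝ) * ((if (i:ℕ) ≤ 1 then 2 else 2*((i:ℕ):ℝ) - 1) / (2*m+3)))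
      = (∑ i, (a i : ℝ) * (if (i:ℕ) ≤ 1 then 2 else 2*((i:ℕ):ℝ) - 1)) / (2*m+3) by
    rw [Finset.sum_div]; apply Finset.sum_congr rfl; intro i _; ring]
  congr 1
  rw [← Finset.sum_filter_add_sum_filter_not Finset.univ (fun i : Fin (2+m) => (i:ℕ) ≤ 1)]
  have hfil1 : Finset.univ.filter (fun i : Fin (2+m) => (i:ℕ) ≤ 1) = {i0 m, i1 m} := by
    ext i
    simp only [Finset.mem_filter, Finset.mem_univ, true_and, Finset.mem_insert,
      Finset.mem_singleton, Fin.ext_iff, i0, i1]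
    omega
  have h1 : (∑ i ∈ Finset.univ.filter (fun i : Fin (2+m) => (i:ℕ) ≤ 1),
      (a i : ℝ) * (if (i:ℕ) ≤ 1 then 2 else 2*((i:ℕ):ℝ) - 1))
      = 2 * (a (i0 m) : ℝ) + 2 * (a (i1 m) : ℝ) := by
    rw [hfil1, Finset.sum_pair i0_ne_i1]
    rw [if_pos (by simp [i0]), if_pos (by simp [i1])]
    ring
  have h2 : (∑ i ∈ Finset.univ.filter (fun i : Fin (2+m) => ¬ (i:ℕ) ≤ 1),
      (a i : ℝ) * (if (i:ℕ) ≤ 1 then 2 else 2*((i:ℕ):ℝ) - 1))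
      = ∑ i ∈ Finset.univ.filter (fun i : Fin (2+m) => 2 ≤ (i:ℕ)),
        (2*((i:ℕ):ℝ) - 1) * (a i : ℝ) := by
    apply Finset.sum_congr
    · ext i
      simp only [Finset.mem_filter, Finset.mem_univ, true_and]
      omega
    · intro i hi
      simp only [Finset.mem_filter, Finset.mem_univ, true_and] at hi
      rw [if_neg (by omega)]
      ring
  rw [h1, h2, Npair]
  push_cast
  ring

lemma verts_pair_ge (a : Fin (2+m) → ℤ) :
    ∀ v ∈ verts m, ((μval m a : ℤ) : ℝ) ≤ pair a v := by
  rintro v hv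
  rcases hv with rfl | rfl | ⟨j, hj, rfl⟩
  · rw [pair_vA]
    have : μval m a ≤ 2*a (i0 m) + Ssum m a m := min_le_left _ _
    push_cast
    exact_mod_cast by push_cast; exact_mod_cast this
  · rw [pair_vB]
    have : μval m a ≤ 2*a (i1 m) + Ssum m a m :=
      le_trans (min_le_right _ _) (min_le_left _ _)
    exact_mod_cast this
  · rw [pair_wv]
    exact_mod_cast μval_le_S a j hj

lemma bddBelow_pair_iterPyr (a : Fin (2+m) → ℤ) : BddBelow (pair a '' iterPyr m) := by
  refine ⟨((μval m a : ℤ) : ℝ), ?_⟩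
  rintro _ ⟨x, hx, rfl⟩
  rw [iterPyr_eq] at hx
  exact hull_pair_ge a _ _ (verts_pair_ge a) x hx

lemma suppFn_iterPyr_le (a : Fin (2+m) → ℤ) :
    suppFn (iterPyr m) a ≤ ((μval m a : ℤ) : ℝ) := by
  have hmem : ∃ v ∈ verts m, pair a v = ((μval m a : ℤ) : ℝ) := by
    obtain ⟨j, hjmem, hj⟩ := Finset.exists_mem_eq_inf'
      (⟨0, by simp⟩ : (Finset.range (m+1)).Nonempty) (Ssum m a)
    unfold μval
    rcases min_cases (2*a (i0 m) + Ssum m a m)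
      (min (2*a (i1 m) + Ssum m a m) ((Finset.range (m+1)).inf' ⟨0, by simp⟩ (Ssum m a))) with
      ⟨h, _⟩ | ⟨h, _⟩
    · exact ⟨vA m, Set.mem_insert _ _, by rw [pair_vA, h]; push_cast; ring⟩
    · rcases min_cases (2*a (i1 m) + Ssum m a m)
        ((Finset.range (m+1)).inf' ⟨0, by simp⟩ (Ssum m a)) with ⟨h2, _⟩ | ⟨h2, _⟩
      · refine ⟨vB m, Set.mem_insert_of_mem _ (Set.mem_insert _ _), ?_⟩
        rw [pair_vB, h, h2]; push_cast; ring
      · refine ⟨wv m j, Set.mem_insert_of_mem _ (Set.mem_insert_of_mem _ ⟨j, ?_, rfl⟩), ?_⟩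
        · exact Nat.lt_succ_iff.mp (Finset.mem_range.mp hjmem)
        · rw [pair_wv, h, h2, hj]
  obtain ⟨v, hv, hpv⟩ := hmem
  rw [← hpv]
  apply suppFn_le a (bddBelow_pair_iterPyr a)
  rw [iterPyr_eq]
  exact subset_convexHull ℝ _ hv

lemma xstar_mem : xstar m ∈ fineAdjoint (iterPyr m) (2/(2*(m:ℝ)+3)) := by
  intro a ha
  have hN : (0:ℝ) < 2*(m:ℝ)+3 := by positivity
  have h1 := suppFn_iterPyr_le a
  have h2 := key a ha
  rw [pair_xstar]
  have h3 : ((μval m a : ℤ) : ℝ) + 2/(2*(m:ℝ)+3) ≤ (Npair m a : ℝ) / (2*(m:ℝ)+3) := by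
    rw [show ((μval m a : ℤ) : ℝ) + 2/(2*(m:ℝ)+3)
        = ((2*(m:ℝ)+3) * ((μval m a : ℤ):ℝ) + 2) / (2*(m:ℝ)+3) by
      field_simp]
    gcongr
    exact_mod_cast h2
  linarith

section Empty
variable {m : ℕ}

def evf (m : ℕ) (i₀ : Fin (2+m)) : Fin (2+m) → ℤ := fun i => if i = i₀ then 1 else 0

lemma pair_evf (i₀ : Fin (2+m)) (x : Fin (2+m) → ℝ) : pair (evf m i₀) x = x i₀ := by
  unfold pair evf
  rw [show (∑ i, ((if i = i₀ then (1:ℤ) else 0 : ℤ) : ℝ) * x i)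
      = ∑ i, (if i = i₀ then x i else 0) by
    apply Finset.sum_congr rfl; intro i _
    by_cases h : i = i₀ <;> simp [h]]
  rw [Finset.sum_ite_eq' Finset.univ i₀ x]
  simp

lemma pair_addf {d : ℕ} (a b : Fin d → ℤ) (x : Fin d → ℝ) :
    pair (a + b) x = pair a x + pair b x := by
  unfold pair
  rw [← Finset.sum_add_distrib]
  apply Finset.sum_congr rfl
  intro i _
  simp only [Pi.add_apply]
  push_cast
  ring

lemma pair_subf {d : ℕ} (a b : Fin d → ℤ) (x : Fin d → ℝ) :
    pair (a - b) x = pair a x - pair b x := by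
  unfold pair
  rw [← Finset.sum_sub_distrib]
  apply Finset.sum_congr rfl
  intro i _
  simp only [Pi.sub_apply]
  push_cast
  ring

lemma pair_negf {d : ℕ} (a : Fin d → ℤ) (x : Fin d → ℝ) : pair (-a) x = - pair a x := by
  unfold pair
  rw [← Finset.sum_neg_distrib]
  apply Finset.sum_congr rfl
  intro i _
  simp only [Pi.neg_apply]
  push_cast
  ring

lemma vA_apply (c : ℕ) (h : c < 2+m) :
    vA m ⟨c,h⟩ = if c = 0 then 2 else if 2 ≤ c then 1 else 0 := by
  simp only [vA, wv]
  split_ifs <;> first | omega | contradiction | norm_num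

lemma vB_apply (c : ℕ) (h : c < 2+m) :
    vB m ⟨c,h⟩ = if c = 1 then 2 else if 2 ≤ c then 1 else 0 := by
  simp only [vB, wv]
  split_ifs <;> first | omega | contradiction | norm_num

lemma wv_apply (j c : ℕ) (h : c < 2+m) :
    wv m j ⟨c,h⟩ = if 2+m ≤ c+j then 1 else 0 := rfl

lemma iterPyr_nonempty : (iterPyr m).Nonempty := by
  rw [iterPyr_eq]
  exact ⟨vA m, subset_convexHull ℝ _ (Set.mem_insert _ _)⟩

lemma suppFn_ge (a : Fin (2+m) → ℤ) (c : ℝ)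
    (h : ∀ v ∈ verts m, c ≤ pair a v) : c ≤ suppFn (iterPyr m) a :=
  le_suppFn_s11 a c (verts m) _ (iterPyr_eq m) iterPyr_nonempty h

lemma evf_ne (i₀ : Fin (2+m)) : evf m i₀ ≠ 0 := by
  intro h
  have := congrFun h i₀
  simp [evf] at this

lemma verts_coord_nonneg : ∀ v ∈ verts m, ∀ i, 0 ≤ v i := by
  rintro v (rfl | rfl | ⟨j, hj, rfl⟩) i <;> simp only [vA, vB, wv] <;>
    split_ifs <;> norm_num

lemma coord_ge (s : ℝ) (x : Fin (2+m) → ℝ) (hx : x ∈ fineAdjoint (iterPyr m) s)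
    (i₀ : Fin (2+m)) : s ≤ x i₀ := by
  have h := hx (evf m i₀) (evf_ne i₀)
  rw [pair_evf] at h
  have h2 : (0:ℝ) ≤ suppFn (iterPyr m) (evf m i₀) := by
    apply suppFn_ge
    intro v hv
    rw [pair_evf]
    exact verts_coord_nonneg v hv i₀
  linarith

lemma adjoint_bound (s : ℝ) (x : Fin (2+m) → ℝ)
    (hx : x ∈ fineAdjoint (iterPyr m) s) : (2*(m:ℝ)+3) * s ≤ 2 := by
  have h0 := coord_ge s x hx (i0 m)
  have h1 := coord_ge s x hx (i1 m)
  rcases Nat.eq_zero_or_pos m with hm | hm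
  · -- m = 0 : use -e₀ - e₁
    subst hm
    set g : Fin 2 → ℤ := (- evf 0 (i0 0)) - evf 0 (i1 0) with hg
    have hgne : g ≠ 0 := by
      intro h
      have := congrFun h (i0 0)
      simp [hg, evf, i0, i1, Fin.ext_iff] at this
    have hpg : ∀ y : Fin 2 → ℝ, pair g y = - y (i0 0) - y (i1 0) := by
      intro y
      rw [hg, pair_subf, pair_negf, pair_evf, pair_evf]
    have hsg : (-2:ℝ) ≤ suppFn (iterPyr 0) g := by
      apply suppFn_ge
      rintro v (rfl | rfl | ⟨j, hj, rfl⟩) <;> rw [hpg] <;>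
        simp only [show i0 0 = (⟨0, by omega⟩ : Fin 2) from rfl,
          show i1 0 = (⟨1, by omega⟩ : Fin 2) from rfl,
          vA_apply, vB_apply, wv_apply] <;> split_ifs <;> first | omega | contradiction | norm_num
    have h := hx g hgne
    rw [hpg] at h
    push_cast
    linarith
  · -- m ≥ 1: chain
    have hi2 : (2:ℕ) < 2+m := by omega
    -- base: 2*x₂ ≥ 3s
    set G : Fin (2+m) → ℤ :=
      (evf m ⟨2,hi2⟩ + evf m ⟨2,hi2⟩ - evf m (i0 m)) - evf m (i1 m) with hGdef
    have hGne : G ≠ 0 := by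
      intro h
      have := congrFun h ⟨2,hi2⟩
      simp [hGdef, evf, i0, i1, Fin.ext_iff] at this
    have hpG : ∀ y : Fin (2+m) → ℝ, pair G y = 2 * y ⟨2,hi2⟩ - y (i0 m) - y (i1 m) := by
      intro y
      rw [hGdef, pair_subf, pair_subf, pair_addf, pair_evf, pair_evf, pair_evf]
      ring
    have hsG : (0:ℝ) ≤ suppFn (iterPyr m) G := by
      apply suppFn_ge
      rintro v (rfl | rfl | ⟨j, hj, rfl⟩) <;> rw [hpG] <;>
        simp only [show i0 m = (⟨0, by omega⟩ : Fin (2+m)) from rfl,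
          show i1 m = (⟨1, by omega⟩ : Fin (2+m)) from rfl,
          vA_apply, vB_apply, wv_apply] <;> split_ifs <;> first | omega | contradiction | norm_num
    have hbase : (3:ℝ)*s ≤ 2 * x ⟨2,hi2⟩ := by
      have h := hx G hGne
      rw [hpG] at h
      simp only [show i0 m = (⟨0, by omega⟩ : Fin (2+m)) from rfl,
        show i1 m = (⟨1, by omega⟩ : Fin (2+m)) from rfl] at h0 h1 h
      linarith
    -- chain step
    have hstep : ∀ k : ℕ, (hk : k + 1 < m) →
        x ⟨2+k, by omega⟩ + s ≤ x ⟨3+k, by omega⟩ := by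
      intro k hk
      set D : Fin (2+m) → ℤ := evf m ⟨3+k, by omega⟩ - evf m ⟨2+k, by omega⟩ with hDdef
      have hDne : D ≠ 0 := by
        intro h
        have := congrFun h ⟨3+k, by omega⟩
        simp [hDdef, evf, Fin.ext_iff] at this
      have hpD : ∀ y : Fin (2+m) → ℝ,
          pair D y = y ⟨3+k, by omega⟩ - y ⟨2+k, by omega⟩ := by
        intro y
        rw [hDdef, pair_subf, pair_evf, pair_evf]
      have hsD : (0:ℝ) ≤ suppFn (iterPyr m) D := by
        apply suppFn_ge
        rintro v (rfl | rfl | ⟨j, hj, rfl⟩) <;> rw [hpD] <;>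
          simp only [vA_apply, vB_apply, wv_apply] <;> split_ifs <;>
            first | omega | contradiction | norm_num
      have h := hx D hDne
      rw [hpD] at h
      linarith
    have hchain : ∀ k : ℕ, (hk : k < m) → (3 + 2*(k:ℝ)) * s ≤ 2 * x ⟨2+k, by omega⟩ := by
      intro k
      induction k with
      | zero => intro _; simpa using hbase
      | succ n ih =>
        intro hk
        have h1' := ih (by omega)
        have h2' := hstep n (by omega)
        have : (2+(n+1) : ℕ) = 3+n := by omega
        rw [show (⟨2+(n+1), by omega⟩ : Fin (2+m)) = ⟨3+n, by omega⟩ by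
          apply Fin.ext; simp; omega]
        push_cast
        nlinarith
    -- last inequality
    have hlast : x ⟨2+(m-1), by omega⟩ ≤ 1 - s := by
      set L : Fin (2+m) → ℤ := - evf m ⟨2+(m-1), by omega⟩ with hLdef
      have hLne : L ≠ 0 := by
        intro h
        have := congrFun h ⟨2+(m-1), by omega⟩
        simp [hLdef, evf, Fin.ext_iff] at this
      have hpL : ∀ y : Fin (2+m) → ℝ, pair L y = - y ⟨2+(m-1), by omega⟩ := by
        intro y
        rw [hLdef, pair_negf, pair_evf]
      have hsL : (-1:ℝ) ≤ suppFn (iterPyr m) L := by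
        apply suppFn_ge
        rintro v (rfl | rfl | ⟨j, hj, rfl⟩) <;> rw [hpL] <;>
          simp only [vA_apply, vB_apply, wv_apply] <;> split_ifs <;>
            first | omega | contradiction | norm_num
      have h := hx L hLne
      rw [hpL] at h
      linarith
    have := hchain (m-1) (by omega)
    have hcast : ((m-1 : ℕ) : ℝ) = (m:ℝ) - 1 := by
      have : (1:ℕ) ≤ m := hm
      push_cast [this]
      ring
    rw [hcast] at this
    nlinarith
end Empty

section Transfer
variable {k : ℕ}

def affMap (U : Matrix (Fin k) (Fin k) ℤ) (v : Fin k → ℤ) : (Fin k → ℝ) → (Fin k → ℝ) :=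
  fun x => fun i => (∑ j, (U i j : ℝ) * x j) + (v i : ℝ)

lemma sInf_shift (S : Set ℝ) (hS : S.Nonempty) (hb : BddBelow S) (K : ℝ) :
    sInf ((fun r => r + K) '' S) = sInf S + K :=
  ((monotone_id.add_const K).map_csInf_of_continuousAt
    (Continuous.continuousAt (by continuity)) hS hb).symm

lemma pair_affMap (U : Matrix (Fin k) (Fin k) ℤ) (v : Fin k → ℤ) (a : Fin k → ℤ)
    (x : Fin k → ℝ) :
    pair a (affMap U v x)
      = pair (fun j => ∑ i, a i * U i j) x + ((∑ i, a i * v i : ℤ) : ℝ) := by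
  unfold pair affMap
  rw [show (∑ i, (a i : ℝ) * ((∑ j, (U i j : ℝ) * x j) + (v i : ℝ)))
      = (∑ i, ∑ j, (a i : ℝ) * ((U i j : ℝ) * x j)) + ∑ i, (a i : ℝ) * (v i : ℝ) by
    rw [← Finset.sum_add_distrib]
    apply Finset.sum_congr rfl
    intro i _
    rw [mul_add, Finset.mul_sum]]
  rw [Finset.sum_comm]
  push_cast
  congr 1
  apply Finset.sum_congr rfl
  intro j _
  rw [Finset.sum_mul]
  apply Finset.sum_congr rfl
  intro i _
  push_cast
  ring

lemma vecMul_eq (a : Fin k → ℤ) (U : Matrix (Fin k) (Fin k) ℤ) :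
    (fun j => ∑ i, a i * U i j) = Matrix.vecMul a U := by
  funext j
  simp [Matrix.vecMul, dotProduct]

lemma vecMul_ne {a : Fin k → ℤ} {U : Matrix (Fin k) (Fin k) ℤ}
    (hdet : IsUnit U.det) (ha : a ≠ 0) : (fun j => ∑ i, a i * U i j) ≠ 0 := by
  rw [vecMul_eq]
  intro h
  apply ha
  have : Matrix.vecMul (Matrix.vecMul a U) U⁻¹ = Matrix.vecMul (0 : Fin k → ℤ) U⁻¹ := by
    rw [h]
  rw [Matrix.vecMul_vecMul, Matrix.mul_nonsing_inv U hdet, Matrix.vecMul_one,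
    Matrix.zero_vecMul] at this
  exact this

lemma transfer (Q P : Set (Fin k → ℝ)) (U : Matrix (Fin k) (Fin k) ℤ) (v : Fin k → ℤ)
    (hdet : IsUnit U.det) (hPQ : P = affMap U v '' Q) (hQne : Q.Nonempty)
    (hQb : ∀ b : Fin k → ℤ, BddBelow (pair b '' Q)) (s : ℝ) :
    (fineAdjoint Q s).Nonempty → (fineAdjoint P s).Nonempty := by
  rintro ⟨x, hx⟩
  refine ⟨affMap U v x, ?_⟩
  intro a ha
  set b := fun j => ∑ i, a i * U i j with hbdef
  set K := ((∑ i, a i * v i : ℤ) : ℝ) with hKdef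
  have hb : b ≠ 0 := vecMul_ne hdet ha
  have hsupp : suppFn P a = suppFn Q b + K := by
    rw [hPQ, suppFn, Set.image_image]
    rw [show (fun y => pair a (affMap U v y)) '' Q = (fun r => r + K) '' (pair b '' Q) by
      rw [Set.image_image]
      apply Set.image_congr
      intro y _
      rw [pair_affMap]]
    rw [sInf_shift _ (hQne.image _) (hQb b)]
    rfl
  have h := hx b hb
  rw [pair_affMap, ← hbdef, ← hKdef, hsupp]
  linarith

lemma affMap_comp (U₂ U₁ : Matrix (Fin k) (Fin k) ℤ) (v₂ v₁ : Fin k → ℤ)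
    (x : Fin k → ℝ) :
    affMap U₂ v₂ (affMap U₁ v₁ x) = affMap (U₂ * U₁) (U₂.mulVec v₁ + v₂) x := by
  funext i
  unfold affMap
  rw [show (∑ j, (U₂ i j : ℝ) * ((∑ l, (U₁ j l : ℝ) * x l) + (v₁ j : ℝ)))
      = (∑ j, ∑ l, (U₂ i j : ℝ) * ((U₁ j l : ℝ) * x l)) + ∑ j, (U₂ i j : ℝ) * (v₁ j : ℝ) by
    rw [← Finset.sum_add_distrib]
    apply Finset.sum_congr rfl
    intro j _
    rw [mul_add, Finset.mul_sum]]
  rw [Finset.sum_comm]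
  have h1 : ∀ l, (∑ j, (U₂ i j : ℝ) * ((U₁ j l : ℝ) * x l)) = (((U₂ * U₁) i l : ℤ) : ℝ) * x l := by
    intro l
    rw [Matrix.mul_apply]
    push_cast
    rw [Finset.sum_mul]
    apply Finset.sum_congr rfl
    intro j _
    ring
  have h2 : (∑ j, (U₂ i j : ℝ) * (v₁ j : ℝ)) = ((U₂.mulVec v₁ i : ℤ) : ℝ) := by
    show _ = ((dotProduct (U₂ i) v₁ : ℤ) : ℝ)
    unfold dotProduct
    push_cast
    rfl
  rw [Finset.sum_congr rfl (fun l _ => h1 l), h2]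
  simp only [Pi.add_apply]
  push_cast
  ring

lemma affMap_id (x : Fin k → ℝ) : affMap (1 : Matrix (Fin k) (Fin k) ℤ) 0 x = x := by
  funext i
  unfold affMap
  rw [show (∑ j, ((1 : Matrix (Fin k) (Fin k) ℤ) i j : ℝ) * x j)
      = ∑ j, (if j = i then x j else 0) by
    apply Finset.sum_congr rfl
    intro j _
    rw [Matrix.one_apply]
    by_cases h : i = j
    · subst h; simp
    · rw [if_neg h, if_neg (fun hc => h hc.symm)]; simp]
  rw [Finset.sum_ite_eq' Finset.univ i x]
  simp

end Transfer

section Final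

lemma fineAdjoint_anti {d : ℕ} (P : Set (Fin d → ℝ)) {s t : ℝ} (h : s ≤ t) :
    fineAdjoint P t ⊆ fineAdjoint P s := by
  intro x hx a ha
  have := hx a ha
  linarith

lemma bddBelow_pair_hull_s11 {d : ℕ} (V : Finset (Fin d → ℝ)) (hV : V.Nonempty)
    (P : Set (Fin d → ℝ)) (hP : P = convexHull ℝ (V : Set (Fin d → ℝ)))
    (b : Fin d → ℤ) : BddBelow (pair b '' P) := by
  refine ⟨V.inf' hV (pair b), ?_⟩
  rintro _ ⟨x, hx, rfl⟩
  exact hull_pair_ge b _ _ (fun w hw => Finset.inf'_le _ hw) x (hP ▸ hx)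

lemma fineNumber_iterPyr (m : ℕ) : fineNumber (iterPyr m) = 2/(2*(m:ℝ)+3) := by
  rw [fineNumber]
  have hN : (0:ℝ) < 2*(m:ℝ)+3 := by positivity
  have hset : {s : ℝ | 0 < s ∧ (fineAdjoint (iterPyr m) s).Nonempty}
      = Set.Ioc 0 (2/(2*(m:ℝ)+3)) := by
    ext s
    simp only [Set.mem_setOf_eq, Set.mem_Ioc]
    constructor
    · rintro ⟨hs, x, hx⟩
      refine ⟨hs, ?_⟩
      have := adjoint_bound s x hx
      rw [le_div_iff₀ hN]
      linarith
    · rintro ⟨hs, hle⟩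
      exact ⟨hs, ⟨xstar m, fineAdjoint_anti _ hle xstar_mem⟩⟩
  rw [hset, csSup_Ioc (by positivity)]

end Final

/-- the Fine ℚ-codegree of a `d`-dimensional exceptional simplex
(`d = 2 + m`) equals `d - 1/2`. -/
theorem stmt_11 (m : ℕ) (P : Set (Fin (2 + m) → ℝ)) (hP : IsLatticePolytope P)
    (hex : UnimodEquiv P (iterPyr m)) :
    fineCodeg P = ((2 + m : ℕ) : ℝ) - 1 / 2 := by
  obtain ⟨U, hdet, v, hPQ⟩ := hex
  have hPQ' : P = affMap U v '' iterPyr m := hPQ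
  obtain ⟨V, hVne, _, hPV⟩ := hP
  obtain ⟨v₀, hv₀⟩ := hVne
  have hPne : P.Nonempty := ⟨v₀, hPV ▸ subset_convexHull ℝ _ hv₀⟩
  have hPb : ∀ b : Fin (2+m) → ℤ, BddBelow (pair b '' P) :=
    bddBelow_pair_hull_s11 V ⟨v₀, hv₀⟩ P hPV
  have hQP : iterPyr m = affMap U⁻¹ (-(U⁻¹.mulVec v)) '' P := by
    rw [hPQ', Set.image_image]
    rw [show (fun x => affMap U⁻¹ (-(U⁻¹.mulVec v)) (affMap U v x)) = fun x : Fin (2+m) → ℝ => x by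
      funext x
      rw [affMap_comp, Matrix.nonsing_inv_mul U hdet, add_neg_cancel, affMap_id]]
    simp
  have hdet' : IsUnit (U⁻¹).det := Matrix.isUnit_nonsing_inv_det U hdet
  have hsetEq : {s : ℝ | 0 < s ∧ (fineAdjoint P s).Nonempty}
      = {s : ℝ | 0 < s ∧ (fineAdjoint (iterPyr m) s).Nonempty} := by
    ext s
    simp only [Set.mem_setOf_eq]
    apply and_congr_right
    intro _
    constructor
    · exact transfer P (iterPyr m) U⁻¹ (-(U⁻¹.mulVec v)) hdet' hQP hPne hPb s
    · exact transfer (iterPyr m) P U v hdet hPQ' iterPyr_nonempty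
        (fun b => bddBelow_pair_iterPyr b) s
  have hfn : fineNumber P = 2/(2*(m:ℝ)+3) := by
    rw [fineNumber, hsetEq, ← fineNumber, fineNumber_iterPyr]
  rw [fineCodeg, hfn, inv_div]
  push_cast
  ring
end Core
end
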